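/- arXiv:1706.00606 — 8 statements merged into one kernel-verified Lean document; each statement's English description precedes it below -/
import Mathlib

section
/- For a smooth function f on (0,∞) and integers n,k ≥ 0 and λ > 0, the identity x^{-(n+λ-1)} (x^{k+n+λ-1} f^{(n)}(x))^{(k)} = Σ_{j=0}^{k} C(k,j) · (Γ(n+k+λ)/Γ(n+j+λ)) · x^j f^{(n+j)}(x) holds for all x > 0. -/
open Real Set Finset

private lemma uds : UniqueDiffOn ℝ (Set.Ioi (0:ℝ)) := isOpen_Ioi.uniqueDiffOn

private lemma iter_add (f : ℝ → ℝ) (n : ℕ) : ∀ (j : ℕ), ∀ x ∈ Set.Ioi (0:ℝ),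
    iteratedDerivWithin (n + j) f (Set.Ioi 0) x
      = iteratedDerivWithin j (iteratedDerivWithin n f (Set.Ioi 0)) (Set.Ioi 0) x := by
  intro j
  induction j with
  | zero => intro x hx; simp
  | succ j ih =>
    intro x hx
    rw [show n + (j+1) = (n+j) + 1 by ring, iteratedDerivWithin_succ,
      iteratedDerivWithin_succ]
    exact derivWithin_congr (fun z hz => ih z hz) (ih x hx)

private lemma contDiffOn_iter (g : ℝ → ℝ) (hg : ContDiffOn ℝ (⊤ : ℕ∞) g (Set.Ioi 0)) (n : ℕ) :
    ContDiffOn ℝ (⊤ : ℕ∞) (iteratedDerivWithin n g (Set.Ioi 0)) (Set.Ioi 0) := by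
  induction n with
  | zero => simpa using hg
  | succ n ih =>
    have h := ih.derivWithin uds (m := ((⊤ : ℕ∞) : WithTop ℕ∞))
      (by exact_mod_cast (le_top : (⊤:ℕ∞) + 1 ≤ ⊤))
    exact h.congr (fun z hz => (congrFun iteratedDerivWithin_succ z))

private lemma hasDerivAt_iter (g : ℝ → ℝ) (hg : ContDiffOn ℝ (⊤ : ℕ∞) g (Set.Ioi 0)) (j : ℕ)
    {x : ℝ} (hx : x ∈ Set.Ioi (0:ℝ)) :
    HasDerivAt (iteratedDerivWithin j g (Set.Ioi 0))
      (iteratedDerivWithin (j+1) g (Set.Ioi 0) x) x := by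
  have hd : DifferentiableWithinAt ℝ (iteratedDerivWithin j g (Set.Ioi 0)) (Set.Ioi 0) x :=
    (hg.differentiableOn_iteratedDerivWithin (m := j)
      (by exact_mod_cast ENat.coe_lt_top j) uds) x hx
  rw [iteratedDerivWithin_succ]
  exact hd.hasDerivWithinAt.hasDerivAt (isOpen_Ioi.mem_nhds hx)

private lemma prod_shift (j k : ℕ) (μ : ℝ) :
    (∏ i ∈ Finset.Ico (j+1) (k+1), (μ + (i:ℝ) + 1)) = ∏ i ∈ Finset.Ico j k, (μ + (i:ℝ) + 2) := by
  rw [Finset.prod_Ico_eq_prod_range, Finset.prod_Ico_eq_prod_range,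
    show k + 1 - (j + 1) = k - j by omega]
  exact Finset.prod_congr rfl (fun i _ => by push_cast; ring)

private lemma sum_step (k : ℕ) (μ : ℝ) (x : ℝ) (A : ℕ → ℝ) :
    ∑ j ∈ Finset.range (k+1),
      ((k.choose j : ℝ) * (∏ i ∈ Finset.Ico j k, ((μ+1) + (i:ℝ) + 1)) *
          (((j:ℝ) + (μ+1)) * x ^ ((j:ℝ) + (μ+1) - 1)) * A j
        + (k.choose j : ℝ) * (∏ i ∈ Finset.Ico j k, ((μ+1) + (i:ℝ) + 1)) *
          x ^ ((j:ℝ) + (μ+1)) * A (j+1))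
    = ∑ j ∈ Finset.range (k+1+1),
        ((k+1).choose j : ℝ) * (∏ i ∈ Finset.Ico j (k+1), (μ + (i:ℝ) + 1)) *
          x ^ ((j:ℝ) + μ) * A j := by
  rw [Finset.sum_add_distrib, Finset.sum_range_succ', Finset.sum_range_succ]
  conv_rhs => rw [Finset.sum_range_succ', Finset.sum_range_succ]
  have hmid : ∀ j ∈ Finset.range k,
      (↑(k.choose (j + 1)) * ∏ i ∈ Finset.Ico (j + 1) k, (μ + 1 + (i:ℝ) + 1)) *
          ((((j:ℕ)+1 : ℕ) + (μ + 1)) * x ^ (((j:ℕ)+1 : ℕ) + (μ + 1) - 1)) * A (j + 1)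
        + (↑(k.choose j) * ∏ i ∈ Finset.Ico j k, (μ + 1 + (i:ℝ) + 1)) *
            x ^ ((j:ℝ) + (μ + 1)) * A (j + 1)
      = (↑((k + 1).choose (j + 1)) * ∏ i ∈ Finset.Ico (j + 1) (k + 1), (μ + (i:ℝ) + 1)) *
          x ^ ((((j:ℕ)+1 : ℕ) : ℝ) + μ) * A (j + 1) := by
    intro j hj
    have hjk : j < k := Finset.mem_range.mp hj
    rw [prod_shift j k μ,
      Finset.prod_eq_prod_Ico_succ_bot hjk (fun i => μ + (i:ℝ) + 2),
      Finset.prod_eq_prod_Ico_succ_bot hjk (fun i => μ + 1 + (i:ℝ) + 1),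
      show (∏ i ∈ Finset.Ico (j+1) k, (μ + (i:ℝ) + 2))
          = ∏ i ∈ Finset.Ico (j+1) k, (μ + 1 + (i:ℝ) + 1) from
        Finset.prod_congr rfl (fun i _ => by ring),
      Nat.choose_succ_succ,
      show (((j:ℕ)+1 : ℕ) : ℝ) + (μ + 1) - 1 = (j:ℝ) + (μ + 1) by push_cast; ring,
      show (((j:ℕ)+1 : ℕ) : ℝ) + μ = (j:ℝ) + (μ + 1) by push_cast; ring]
    push_cast
    ring
  have hadd := Finset.sum_congr rfl hmid
  rw [Finset.sum_add_distrib] at hadd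
  have hzero :
      (↑(k.choose 0) * ∏ i ∈ Finset.Ico 0 k, (μ + 1 + (i:ℝ) + 1)) *
          ((((0:ℕ):ℝ) + (μ + 1)) * x ^ (((0:ℕ):ℝ) + (μ + 1) - 1)) * A 0
      = (↑((k + 1).choose 0) * ∏ i ∈ Finset.Ico 0 (k + 1), (μ + (i:ℝ) + 1)) *
          x ^ (((0:ℕ):ℝ) + μ) * A 0 := by
    rw [Finset.prod_eq_prod_Ico_succ_bot (Nat.succ_pos k) (fun i => μ + (i:ℝ) + 1),
      prod_shift 0 k μ,
      show (∏ i ∈ Finset.Ico 0 k, (μ + (i:ℝ) + 2))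
          = ∏ i ∈ Finset.Ico 0 k, (μ + 1 + (i:ℝ) + 1) from
        Finset.prod_congr rfl (fun i _ => by ring),
      show (((0:ℕ):ℝ) + (μ + 1) - 1) = ((0:ℕ):ℝ) + μ by push_cast; ring]
    simp only [Nat.choose_zero_right, Nat.cast_zero, Nat.cast_one]
    ring
  have hlast :
      (↑(k.choose k) * ∏ i ∈ Finset.Ico k k, (μ + 1 + (i:ℝ) + 1)) *
          x ^ ((k:ℝ) + (μ + 1)) * A (k + 1)
      = (↑((k + 1).choose (k + 1)) * ∏ i ∈ Finset.Ico (k + 1) (k + 1), (μ + (i:ℝ) + 1)) *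
          x ^ ((((k:ℕ)+1 : ℕ) : ℝ) + μ) * A (k + 1) := by
    rw [show ((((k:ℕ)+1 : ℕ) : ℝ) + μ) = (k:ℝ) + (μ + 1) by push_cast; ring]
    simp
  linarith [hadd, hzero, hlast]

private lemma core (g : ℝ → ℝ) (hg : ContDiffOn ℝ (⊤ : ℕ∞) g (Set.Ioi 0)) :
    ∀ (k : ℕ) (μ : ℝ), ∀ x ∈ Set.Ioi (0:ℝ),
    iteratedDerivWithin k (fun y => y ^ ((k:ℝ) + μ) * g y) (Set.Ioi 0) x
      = ∑ j ∈ Finset.range (k+1),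
          (k.choose j : ℝ) * (∏ i ∈ Finset.Ico j k, (μ + (i:ℝ) + 1)) *
            x ^ ((j:ℝ) + μ) * iteratedDerivWithin j g (Set.Ioi 0) x := by
  intro k
  induction k with
  | zero =>
    intro μ x hx
    simp
  | succ k ih =>
    intro μ x hx
    have hfun : (fun y : ℝ => y ^ ((((k+1:ℕ)):ℝ) + μ) * g y)
        = fun y => y ^ ((k:ℝ) + (μ+1)) * g y := by
      funext y
      rw [show (((k+1:ℕ)):ℝ) + μ = (k:ℝ) + (μ+1) by push_cast; ring]
    rw [hfun, iteratedDerivWithin_succ]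
    have hEq : Set.EqOn
        (iteratedDerivWithin k (fun y => y ^ ((k:ℝ) + (μ+1)) * g y) (Set.Ioi 0))
        (fun z => ∑ j ∈ Finset.range (k+1),
          (k.choose j : ℝ) * (∏ i ∈ Finset.Ico j k, ((μ+1) + (i:ℝ) + 1)) *
            z ^ ((j:ℝ) + (μ+1)) * iteratedDerivWithin j g (Set.Ioi 0) z) (Set.Ioi 0) :=
      fun z hz => ih (μ+1) z hz
    rw [derivWithin_congr hEq (hEq hx), derivWithin_of_isOpen isOpen_Ioi hx]
    have hD : HasDerivAt (fun z => ∑ j ∈ Finset.range (k+1),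
          (k.choose j : ℝ) * (∏ i ∈ Finset.Ico j k, ((μ+1) + (i:ℝ) + 1)) *
            z ^ ((j:ℝ) + (μ+1)) * iteratedDerivWithin j g (Set.Ioi 0) z)
        (∑ j ∈ Finset.range (k+1),
          ((k.choose j : ℝ) * (∏ i ∈ Finset.Ico j k, ((μ+1) + (i:ℝ) + 1)) *
              (((j:ℝ) + (μ+1)) * x ^ ((j:ℝ) + (μ+1) - 1)) *
                iteratedDerivWithin j g (Set.Ioi 0) x
            + (k.choose j : ℝ) * (∏ i ∈ Finset.Ico j k, ((μ+1) + (i:ℝ) + 1)) *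
              x ^ ((j:ℝ) + (μ+1)) * iteratedDerivWithin (j+1) g (Set.Ioi 0) x)) x := by
      apply HasDerivAt.fun_sum
      intro j hj
      exact ((Real.hasDerivAt_rpow_const (p := (j:ℝ)+(μ+1))
        (Or.inl (ne_of_gt (show (0:ℝ) < x from hx)))).const_mul
          ((k.choose j : ℝ) * (∏ i ∈ Finset.Ico j k, ((μ+1) + (i:ℝ) + 1)))).mul
            (hasDerivAt_iter g hg j hx)
    rw [hD.deriv]
    exact sum_step k μ x (fun m => iteratedDerivWithin m g (Set.Ioi 0) x)

private lemma gamma_ratio (μ : ℝ) (hμ : -1 < μ) : ∀ k j : ℕ, j ≤ k →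
    Real.Gamma (μ + k + 1) / Real.Gamma (μ + j + 1)
      = ∏ i ∈ Finset.Ico j k, (μ + (i:ℝ) + 1) := by
  have hpos : ∀ m : ℕ, (0:ℝ) < μ + m + 1 := fun m => by
    have : (0:ℝ) ≤ m := Nat.cast_nonneg m
    linarith
  intro k
  induction k with
  | zero =>
    intro j hj
    interval_cases j
    simp only [Finset.Ico_self, Finset.prod_empty]
    exact div_self (Real.Gamma_pos_of_pos (by linarith)).ne'
  | succ k ih =>
    intro j hj
    rcases Nat.lt_or_ge j (k+1) with h | h
    · have hjk : j ≤ k := by omega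
      rw [Finset.prod_Ico_succ_top hjk, ← ih j hjk,
        show μ + ((k+1:ℕ):ℝ) + 1 = (μ + k + 1) + 1 by push_cast; ring,
        Real.Gamma_add_one (hpos k).ne']
      ring
    · have hjj : j = k+1 := by omega
      subst hjj
      simp only [Finset.Ico_self, Finset.prod_empty]
      refine div_self (Real.Gamma_pos_of_pos ?_).ne'
      have : (0:ℝ) ≤ k := Nat.cast_nonneg k
      linarith

theorem remark_leibniz (f : ℝ → ℝ) (lam : ℝ) (hlam : 0 < lam)
    (hf : ContDiffOn ℝ (⊤ : ℕ∞) f (Set.Ioi 0)) (n k : ℕ) (x : ℝ) (hx : 0 < x) :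
    x ^ (-((n : ℝ) + lam - 1)) *
      iteratedDerivWithin k
        (fun y => y ^ ((k : ℝ) + n + lam - 1) * iteratedDerivWithin n f (Set.Ioi 0) y)
        (Set.Ioi 0) x
    = ∑ j ∈ Finset.range (k + 1),
        (k.choose j : ℝ) * (Real.Gamma ((n : ℝ) + k + lam) / Real.Gamma ((n : ℝ) + j + lam)) *
          x ^ (j : ℕ) * iteratedDerivWithin (n + j) f (Set.Ioi 0) x := by
  have hx' : x ∈ Set.Ioi (0:ℝ) := hx
  have hg : ContDiffOn ℝ (⊤ : ℕ∞) (iteratedDerivWithin n f (Set.Ioi 0)) (Set.Ioi 0) :=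
    contDiffOn_iter f hf n
  have hfun : (fun y : ℝ => y ^ ((k:ℝ) + n + lam - 1) * iteratedDerivWithin n f (Set.Ioi 0) y)
      = fun y => y ^ ((k:ℝ) + ((n:ℝ) + lam - 1)) * iteratedDerivWithin n f (Set.Ioi 0) y := by
    funext y
    rw [show (k:ℝ) + n + lam - 1 = (k:ℝ) + ((n:ℝ)+lam-1) by ring]
  rw [hfun, core _ hg k ((n:ℝ)+lam-1) x hx', Finset.mul_sum]
  refine Finset.sum_congr rfl (fun j hj => ?_)
  rw [← iter_add f n j x hx']
  have hxpow : x ^ (-((n:ℝ)+lam-1)) * x ^ ((j:ℝ) + ((n:ℝ)+lam-1)) = x ^ (j:ℕ) := by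
    rw [← Real.rpow_natCast x j, ← Real.rpow_add hx]
    congr 1
    ring
  have hmain : ∀ a d : ℝ,
      x ^ (-((n:ℝ)+lam-1)) * (a * x ^ ((j:ℝ) + ((n:ℝ)+lam-1)) * d) = a * x ^ (j:ℕ) * d := by
    intro a d
    rw [← hxpow]
    ring
  rw [hmain]
  rw [show (n:ℝ) + (k:ℝ) + lam = ((n:ℝ)+lam-1) + (k:ℝ) + 1 by ring,
    show (n:ℝ) + (j:ℝ) + lam = ((n:ℝ)+lam-1) + (j:ℝ) + 1 by ring,
    gamma_ratio ((n:ℝ)+lam-1) (by linarith) k j (Nat.lt_succ_iff.mp (Finset.mem_range.mp hj))]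
end

section
/- For a smooth function f on (0,∞), integers j, n ≥ 0, and x > 0: (x^j f(x))^{(j+n)} = Σ_{m=0}^{j} C(n+j, j-m) · (j!/m!) · x^m f^{(n+m)}(x). -/
open Real Set Finset

/-- Derivative step for multiplication by `y`. -/
private lemma mul_id_step (g : ℝ → ℝ) (hg : ContDiffOn ℝ (⊤ : ℕ∞) g (Set.Ioi 0)) (N : ℕ) :
    ∀ x ∈ Set.Ioi (0:ℝ),
      iteratedDerivWithin N (fun y => y * g y) (Set.Ioi 0) x
        = x * iteratedDerivWithin N g (Set.Ioi 0) x
          + N * iteratedDerivWithin (N - 1) g (Set.Ioi 0) x := by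
  induction N with
  | zero => intro x hx; simp
  | succ N IH =>
    intro x hx
    have hux := uds x hx
    have hd : ∀ k : ℕ, HasDerivWithinAt (iteratedDerivWithin k g (Set.Ioi 0))
        (iteratedDerivWithin (k + 1) g (Set.Ioi 0) x) (Set.Ioi 0) x := by
      intro k
      have hdk : DifferentiableWithinAt ℝ (iteratedDerivWithin k g (Set.Ioi 0)) (Set.Ioi 0) x :=
        hg.differentiableOn_iteratedDerivWithin (by exact_mod_cast lt_top_iff_ne_top.2 (by simp))
          uds x hx
      rw [iteratedDerivWithin_succ]
      exact hdk.hasDerivWithinAt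
    have key : HasDerivWithinAt
        (fun y => y * iteratedDerivWithin N g (Set.Ioi 0) y
          + (N : ℝ) * iteratedDerivWithin (N - 1) g (Set.Ioi 0) y)
        (1 * iteratedDerivWithin N g (Set.Ioi 0) x
          + x * iteratedDerivWithin (N + 1) g (Set.Ioi 0) x
          + (N : ℝ) * iteratedDerivWithin (N - 1 + 1) g (Set.Ioi 0) x) (Set.Ioi 0) x := by
      exact ((hasDerivWithinAt_id x _).mul (hd N)).add ((hd (N - 1)).const_mul (N : ℝ))
    rw [iteratedDerivWithin_succ,
      derivWithin_congr (fun y hy => IH y hy) (IH x hx), key.derivWithin hux]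
    have hN : (N : ℝ) * iteratedDerivWithin (N - 1 + 1) g (Set.Ioi 0) x
        = N * iteratedDerivWithin N g (Set.Ioi 0) x := by
      cases N with
      | zero => simp
      | succ k => rw [Nat.succ_sub_one]
    rw [hN]
    push_cast
    ring


private lemma sum_step_s1 (g : ℕ → ℝ) (x : ℝ) (j n : ℕ) :
    x * ∑ m ∈ Finset.range (j + 1),
        ((n + 1 + j).choose (j - m) : ℝ) * ((j.factorial : ℝ) / (m.factorial : ℝ)) * x ^ m
          * g (n + 1 + m)
      + ((j + n + 1 : ℕ) : ℝ) * ∑ m ∈ Finset.range (j + 1),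
        ((n + j).choose (j - m) : ℝ) * ((j.factorial : ℝ) / (m.factorial : ℝ)) * x ^ m * g (n + m)
    = ∑ m ∈ Finset.range (j + 1 + 1),
        ((n + (j + 1)).choose (j + 1 - m) : ℝ) * (((j + 1).factorial : ℝ) / (m.factorial : ℝ))
          * x ^ m * g (n + m) := by
  have key : ∀ m ∈ Finset.range (j + 1),
      ((n + (j + 1)).choose (j + 1 - m) : ℝ) * (((j + 1).factorial : ℝ) / (m.factorial : ℝ)) *
          x ^ m * g (n + m)
        = ((j + n + 1 : ℕ) : ℝ) * (((n + j).choose (j - m) : ℝ) *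
            ((j.factorial : ℝ) / (m.factorial : ℝ)) * x ^ m * g (n + m))
          + (m : ℝ) * (((n + (j + 1)).choose (j + 1 - m) : ℝ) *
            ((j.factorial : ℝ) / (m.factorial : ℝ)) * x ^ m * g (n + m)) := by
    intro m hm
    have hmj : m ≤ j := by simpa [Nat.lt_succ_iff] using hm
    have hnat : (j + 1) * ((n + (j + 1)).choose (j + 1 - m))
        = (j + n + 1) * ((n + j).choose (j - m)) + m * ((n + (j + 1)).choose (j + 1 - m)) := by
      have h1 := Nat.add_one_mul_choose_eq (n + j) (j - m)
      have h2 : j - m + 1 = j + 1 - m := by omega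
      have h3 : n + (j + 1) = (n + j) + 1 := by omega
      have h4 : j + 1 = (j - m + 1) + m := by omega
      rw [h3, ← h2, h4, add_mul]
      have : (j - m + 1) * ((n + j + 1).choose (j - m + 1))
          = (j + n + 1) * ((n + j).choose (j - m)) := by
        rw [mul_comm]
        rw [show j + n + 1 = Nat.succ (n + j) by omega,
          show j - m + 1 = Nat.succ (j - m) from rfl]
        exact h1.symm
      rw [this]
    have hc : ((j:ℝ) + 1) * ((n + (j + 1)).choose (j + 1 - m) : ℝ)
        = ((j:ℝ) + (n:ℝ) + 1) * ((n + j).choose (j - m) : ℝ)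
          + (m : ℝ) * ((n + (j + 1)).choose (j + 1 - m) : ℝ) := by
      exact_mod_cast congrArg (fun t : ℕ => (t : ℝ)) hnat
    rw [Nat.factorial_succ]
    push_cast
    linear_combination ((j.factorial : ℝ) / (m.factorial : ℝ) * x ^ m * g (n + m)) * hc
  conv_rhs => rw [Finset.sum_range_succ]
  rw [Finset.sum_congr rfl key, Finset.sum_add_distrib, ← Finset.mul_sum]
  have hshift : ∑ m ∈ Finset.range (j + 1),
      (m : ℝ) * (((n + (j + 1)).choose (j + 1 - m) : ℝ) *
        ((j.factorial : ℝ) / (m.factorial : ℝ)) * x ^ m * g (n + m))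
      = ∑ m ∈ Finset.range j,
        x * (((n + 1 + j).choose (j - m) : ℝ) * ((j.factorial : ℝ) / (m.factorial : ℝ)) * x ^ m
          * g (n + 1 + m)) := by
    rw [Finset.sum_range_succ']
    simp only [Nat.cast_zero, zero_mul, add_zero]
    refine Finset.sum_congr rfl fun m hm => ?_
    have e1 : j + 1 - (m + 1) = j - m := by omega
    have e2 : n + (j + 1) = n + 1 + j := by omega
    have e3 : n + (m + 1) = n + 1 + m := by omega
    rw [e1, e2, e3, Nat.factorial_succ]
    have hfm : (m.factorial : ℝ) ≠ 0 := by exact_mod_cast m.factorial_ne_zero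
    have hfm1 : ((m : ℝ) + 1) ≠ 0 := by positivity
    push_cast
    field_simp
    ring
  have htop : ((n + (j + 1)).choose (j + 1 - (j + 1)) : ℝ) *
        (((j + 1).factorial : ℝ) / ((j + 1).factorial : ℝ)) * x ^ (j + 1) * g (n + (j + 1))
      = x * (((n + 1 + j).choose (j - j) : ℝ) * ((j.factorial : ℝ) / (j.factorial : ℝ))
          * x ^ j * g (n + 1 + j)) := by
    have e2 : n + (j + 1) = n + 1 + j := by omega
    rw [Nat.sub_self, Nat.sub_self, e2, Nat.choose_zero_right]
    have h1 : ((j + 1).factorial : ℝ) ≠ 0 := by exact_mod_cast (j + 1).factorial_ne_zero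
    have h2 : (j.factorial : ℝ) ≠ 0 := by exact_mod_cast j.factorial_ne_zero
    rw [div_self h1, div_self h2]
    push_cast
    ring
  rw [hshift, htop, Finset.mul_sum, Finset.sum_range_succ]
  ring

theorem leibniz_power_formula (f : ℝ → ℝ)
    (hf : ContDiffOn ℝ (⊤ : ℕ∞) f (Set.Ioi 0)) (j n : ℕ) (x : ℝ) (hx : 0 < x) :
    iteratedDerivWithin (j + n) (fun y => y ^ j * f y) (Set.Ioi 0) x
    = ∑ m ∈ Finset.range (j + 1),
        ((n + j).choose (j - m) : ℝ) * ((j.factorial : ℝ) / (m.factorial : ℝ)) *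
          x ^ m * iteratedDerivWithin (n + m) f (Set.Ioi 0) x := by
  induction j generalizing n with
  | zero =>
    simp
  | succ j IH =>
    have hg : ContDiffOn ℝ (⊤ : ℕ∞) (fun y => y ^ j * f y) (Set.Ioi 0) :=
      (contDiffOn_id.pow j).mul hf
    have hrw : (fun y : ℝ => y ^ (j + 1) * f y) = fun y => y * (y ^ j * f y) := by
      funext y; ring
    have hstep := mul_id_step _ hg (j + 1 + n) x hx
    have e1 : j + 1 + n = j + n + 1 := by omega
    have e2 : j + n + 1 = j + (n + 1) := by omega
    rw [hrw, hstep, e1, Nat.add_sub_cancel, e2, IH (n + 1), IH n]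
    exact sum_step_s1 (fun k => iteratedDerivWithin k f (Set.Ioi 0) x) x j n
end

section
/- For real λ > 0 and integers 0 ≤ m ≤ k and n ≥ 0, the combinatorial identity Σ_{j=m}^{k} (λ-1)_{k-j} · C(k,j) · C(n+j, j-m) · (j!/m!) = C(k,m) · Γ(n+k+λ)/Γ(n+m+λ) holds, where (a)_r = a(a+1)⋯(a+r-1) is the Pochhammer symbol. -/
open Real Finset
open scoped Nat

/-!
The Gamma ratio on the right is the rising factorial `(n + m + λ)_{k - m}`. Splitting
`n + m + λ = (n + m + 1) + (λ - 1)` and expanding by the Chu–Vandermonde identity for rising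
factorials gives `∑ᵢ C(k - m, i) (n + m + 1)_i (λ - 1)_{k - m - i}`, where
`(n + m + 1)_i = i! C(n + m + i, i)`. With `j = m + i`, the identity
`C(k, j) j! = C(k, m) C(k - m, i) i! m!` matches this sum with the left-hand side term by term.
-/

theorem ascPochhammer_eval_add {R : Type*} [CommRing R] (x y : R) (r : ℕ) :
    (ascPochhammer R r).eval (x + y) =
      ∑ ij ∈ antidiagonal r, (r.choose ij.1 : R) *
        ((ascPochhammer R ij.1).eval x * (ascPochhammer R ij.2).eval y) := by
  induction r with
  | zero => simp
  | succ r ih =>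
    rw [ascPochhammer_succ_eval, ih, sum_antidiagonal_choose_succ_mul
        (fun i j => (ascPochhammer R i).eval x * (ascPochhammer R j).eval y) r,
      sum_mul, ← sum_add_distrib]
    refine sum_congr rfl fun ij hij => ?_
    have hr : ((ij.1 + ij.2 : ℕ) : R) = r := congrArg Nat.cast (mem_antidiagonal.mp hij)
    rw [Nat.choose_symm_of_eq_add (mem_antidiagonal.mp hij).symm, ascPochhammer_succ_eval,
      ascPochhammer_succ_eval]
    push_cast at hr
    linear_combination (r.choose ij.2 : R) * (ascPochhammer R ij.1).eval x *
      (ascPochhammer R ij.2).eval y * hr.symm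

theorem Real.Gamma_add_nat_div_Gamma {x : ℝ} (hx : ∀ k : ℕ, x ≠ -k) (r : ℕ) :
    Gamma (x + r) / Gamma x = (ascPochhammer ℝ r).eval x := by
  apply Complex.ofReal_injective
  have hx' : ∀ k : ℕ, (x : ℂ) ≠ -k := fun k h => hx k (by exact_mod_cast h)
  rw [Complex.ofReal_div, ← Complex.Gamma_ofReal, ← Complex.Gamma_ofReal]
  push_cast
  rw [Complex.Gamma_add_nat_div_Gamma_eq x hx', ascPochhammer_eval₂ Complex.ofRealHom]
  exact Polynomial.eval₂_at_apply Complex.ofRealHom x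

theorem ascPochhammer_eval_natCast_add_one (S : Type*) [Semiring S] (a i : ℕ) :
    (ascPochhammer S i).eval ((a : S) + 1) = (i ! * (a + i).choose i : ℕ) := by
  rw [← Nat.ascFactorial_eq_factorial_mul_choose, Nat.cast_ascFactorial]
  push_cast; rfl

theorem Nat.choose_add_mul_factorial (k m i : ℕ) :
    k.choose (m + i) * (m + i)! = k.choose m * (k - m).choose i * i ! * m ! := by
  rw [← add_choose_mul_factorial_mul_factorial m i, ← choose_symm_add]
  have hmul := choose_mul (n := k) (Nat.le_add_right m i)
  rw [Nat.add_sub_cancel_left] at hmul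
  rw [← hmul]; ring

theorem chu_vandermonde_corollary (lam : ℝ) (hlam : 0 < lam) (n m k : ℕ) (hmk : m ≤ k) :
    ∑ j ∈ Finset.Icc m k,
        (Polynomial.eval (lam - 1) (ascPochhammer ℝ (k - j))) * (k.choose j : ℝ) *
          ((n + j).choose (j - m) : ℝ) * ((j.factorial : ℝ) / (m.factorial : ℝ))
    = (k.choose m : ℝ) * (Real.Gamma ((n : ℝ) + k + lam) / Real.Gamma ((n : ℝ) + m + lam)) := by
  have hx : ∀ r : ℕ, (n : ℝ) + m + lam ≠ -r := fun r => by
    have : (0 : ℝ) < n + m + lam + r := by positivity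
    linarith
  have hk : (n : ℝ) + k + lam = (n + m + lam) + (k - m : ℕ) := by push_cast [hmk]; ring
  have hsplit : (n : ℝ) + m + lam = ((n + m : ℕ) : ℝ) + 1 + (lam - 1) := by push_cast; ring
  rw [hk, Real.Gamma_add_nat_div_Gamma hx, hsplit, ascPochhammer_eval_add,
    Nat.sum_antidiagonal_eq_sum_range_succ_mk, mul_sum, ← Finset.Ico_add_one_right_eq_Icc,
    sum_Ico_eq_sum_range, Nat.sub_add_comm hmk]
  refine sum_congr rfl fun i _ => ?_
  have hterm : (k.choose (m + i) : ℝ) * (m + i)! = k.choose m * (k - m).choose i * i ! * m ! := by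
    exact_mod_cast Nat.choose_add_mul_factorial k m i
  rw [ascPochhammer_eval_natCast_add_one, Nat.add_sub_cancel_left, ← Nat.sub_sub,
    show n + (m + i) = n + m + i by ring]
  set P := (ascPochhammer ℝ (k - m - i)).eval (lam - 1)
  field_simp
  push_cast
  linear_combination P * ((n + m + i).choose i : ℝ) * hterm
end

section
/- Let λ > 0 and let f be a generalized Stieltjes function of order λ. Then for every k ≥ 0 the function x ↦ x^{1-λ}(x^{λ-1+k}f(x))^{(k)} is completely monotonic on (0,∞). -/
open Real Set MeasureTheory

open Filter Metric Topology

namespace CkAux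

set_option maxHeartbeats 1000000

lemma contOn_rpow (z p : ℝ) (hz : 0 < z) :
    ContinuousOn (fun t : ℝ => (z + t) ^ p) (Ici 0) := by
  intro t ht
  have h0 : z + t ≠ 0 := by
    have : (0:ℝ) ≤ t := ht
    positivity
  exact (((continuous_const.add continuous_id).continuousAt).rpow_const
    (Or.inl h0)).continuousWithinAt

lemma aesm_mul_rpow {μ : Measure ℝ} {w : ℝ → ℝ}
    (hw : AEStronglyMeasurable w (μ.restrict (Ici 0))) (z p : ℝ) (hz : 0 < z) :
    AEStronglyMeasurable (fun t => w t * (z + t) ^ p) (μ.restrict (Ici 0)) :=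
  hw.mul ((contOn_rpow z p hz).aestronglyMeasurable measurableSet_Ici)

theorem stieltjes_deriv_step (μ : Measure ℝ) (w : ℝ → ℝ)
    (hw : AEStronglyMeasurable w (μ.restrict (Ici 0))) {α : ℝ} (hα : 0 < α)
    (hint : ∀ y : ℝ, 0 < y → IntegrableOn (fun t => w t * (y + t) ^ (-α)) (Ici 0) μ)
    {x : ℝ} (hx : 0 < x) :
    IntegrableOn (fun t => w t * (x + t) ^ (-(α + 1))) (Ici 0) μ ∧
      HasDerivAt (fun y => ∫ t in Ici 0, w t * (y + t) ^ (-α) ∂μ)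
        (-α * ∫ t in Ici 0, w t * (x + t) ^ (-(α + 1)) ∂μ) x := by
  have hxt : ∀ᵐ t ∂(μ.restrict (Ici 0)), (0:ℝ) ≤ t := by
    filter_upwards [ae_restrict_mem (measurableSet_Ici : MeasurableSet (Ici (0:ℝ)))] with t ht
    exact ht
  have hεpos : 0 < x / 2 := half_pos hx
  have hmeas : ∀ᶠ y in 𝓝 x, AEStronglyMeasurable (fun t => w t * (y + t) ^ (-α))
      (μ.restrict (Ici 0)) := by
    filter_upwards [isOpen_Ioi.eventually_mem (mem_Ioi.mpr hx)] with y hy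
    exact (hint y hy).aestronglyMeasurable
  have hF'meas : AEStronglyMeasurable (fun t => w t * ((x + t) ^ (-(α + 1)) * (-α)))
      (μ.restrict (Ici 0)) := by
    have := (aesm_mul_rpow hw x (-(α+1)) hx).mul_const (-α)
    exact this.congr (Eventually.of_forall fun t => by ring)
  have hbound : ∀ᵐ t ∂(μ.restrict (Ici 0)), ∀ y ∈ ball x (x / 2),
      ‖w t * ((y + t) ^ (-(α + 1)) * (-α))‖ ≤ (α * (2 / x)) * |w t * (x / 2 + t) ^ (-α)| := by
    filter_upwards [hxt] with t ht
    intro y hy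
    have hy2 : x / 2 < y := by
      have h := abs_lt.mp (by simpa [Real.dist_eq] using mem_ball.mp hy)
      linarith [h.1]
    have h1 : (0:ℝ) < x / 2 + t := by linarith
    have h2 : (0:ℝ) < y + t := by linarith
    have hb1 : (y + t) ^ (-(α + 1)) ≤ (x / 2 + t) ^ (-(α + 1)) :=
      Real.rpow_le_rpow_of_nonpos h1 (by linarith) (by linarith)
    have hb2 : (x / 2 + t) ^ (-(α + 1)) ≤ (x / 2 + t) ^ (-α) * (2 / x) := by
      rw [show -(α + 1) = -α + (-1) by ring, Real.rpow_add h1, Real.rpow_neg_one]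
      have hle : (x / 2 + t)⁻¹ ≤ (x / 2)⁻¹ := by
        apply inv_anti₀ hεpos
        linarith
      have h3 : (0:ℝ) < (x / 2 + t) ^ (-α) := Real.rpow_pos_of_pos h1 _
      have : (x / 2 : ℝ)⁻¹ = 2 / x := by
        rw [inv_div]
      rw [← this]
      exact mul_le_mul_of_nonneg_left hle h3.le
    have hrpos : (0:ℝ) < (y + t) ^ (-(α + 1)) := Real.rpow_pos_of_pos h2 _
    calc ‖w t * ((y + t) ^ (-(α + 1)) * (-α))‖
        = |w t| * ((y + t) ^ (-(α + 1)) * α) := by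
          rw [Real.norm_eq_abs, abs_mul, abs_mul, abs_neg, abs_of_pos hα, abs_of_pos hrpos]
      _ ≤ |w t| * (((x / 2 + t) ^ (-α) * (2 / x)) * α) := by
          have := hb1.trans hb2
          apply mul_le_mul_of_nonneg_left _ (abs_nonneg _)
          exact mul_le_mul_of_nonneg_right this hα.le
      _ = (α * (2 / x)) * |w t * (x / 2 + t) ^ (-α)| := by
          rw [abs_mul, abs_of_pos (Real.rpow_pos_of_pos h1 (-α))]
          ring
  have bint : Integrable (fun t => (α * (2 / x)) * |w t * (x / 2 + t) ^ (-α)|)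
      (μ.restrict (Ici 0)) := ((hint (x/2) hεpos).abs).const_mul _
  have hdiff : ∀ᵐ t ∂(μ.restrict (Ici 0)), ∀ y ∈ ball x (x / 2),
      HasDerivAt (fun y => w t * (y + t) ^ (-α)) (w t * ((y + t) ^ (-(α + 1)) * (-α))) y := by
    filter_upwards [hxt] with t ht
    intro y hy
    have hy2 : x / 2 < y := by
      have h := abs_lt.mp (by simpa [Real.dist_eq] using mem_ball.mp hy)
      linarith [h.1]
    have h2 : (0:ℝ) < y + t := by linarith
    have hd : HasDerivAt (fun y : ℝ => (y + t) ^ (-α)) (1 * (-α) * (y + t) ^ (-α - 1)) y :=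
      ((hasDerivAt_id y).add_const t).rpow_const (Or.inl h2.ne')
    have hd' := hd.const_mul (w t)
    refine hd'.congr_deriv ?_
    rw [show -(α + 1) = -α - 1 by ring]
    ring
  have key := hasDerivAt_integral_of_dominated_loc_of_deriv_le (μ := μ.restrict (Ici 0))
      (F := fun y t => w t * (y + t) ^ (-α))
      (F' := fun y t => w t * ((y + t) ^ (-(α + 1)) * (-α)))
      (x₀ := x) (s := ball x (x / 2))
      (bound := fun t => (α * (2 / x)) * |w t * (x / 2 + t) ^ (-α)|)
      (ball_mem_nhds x hεpos) hmeas (hint x hx) hF'meas hbound bint hdiff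
  constructor
  · refine (key.1.mul_const (-α)⁻¹).congr (Eventually.of_forall fun t => ?_)
    have hα' : (-α) ≠ 0 := neg_ne_zero.mpr hα.ne'
    field_simp
  · have heq : ∫ t in Ici 0, w t * ((x + t) ^ (-(α + 1)) * (-α)) ∂μ
        = -α * ∫ t in Ici 0, w t * (x + t) ^ (-(α + 1)) ∂μ := by
      rw [show (fun t => w t * ((x + t) ^ (-(α + 1)) * (-α)))
          = fun t => (-α) * (w t * (x + t) ^ (-(α + 1))) from funext fun t => by ring]
      exact integral_const_mul _ _
    exact heq ▸ key.2

theorem int_exp (μ : Measure ℝ) (w : ℝ → ℝ)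
    (hw : AEStronglyMeasurable w (μ.restrict (Ici 0))) {α : ℝ} (hα : 0 < α)
    (hint : ∀ y : ℝ, 0 < y → IntegrableOn (fun t => w t * (y + t) ^ (-α)) (Ici 0) μ)
    (n : ℕ) : ∀ y : ℝ, 0 < y →
      IntegrableOn (fun t => w t * (y + t) ^ (-(α + n))) (Ici 0) μ := by
  induction n with
  | zero =>
    intro y hy
    simpa using hint y hy
  | succ n IH =>
    intro y hy
    have h := (stieltjes_deriv_step μ w hw (α := α + n) (by positivity) IH hy).1
    simpa [Nat.cast_add, Nat.cast_one, ← add_assoc] using h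

theorem int_weight (μ : Measure ℝ) (w : ℝ → ℝ)
    (hw : AEStronglyMeasurable w (μ.restrict (Ici 0))) {α : ℝ} (hα : 0 < α)
    (hint : ∀ y : ℝ, 0 < y → IntegrableOn (fun t => w t * (y + t) ^ (-α)) (Ici 0) μ)
    (m : ℕ) {x : ℝ} (hx : 0 < x) :
    IntegrableOn (fun t => w t * t ^ m * (x + t) ^ (-(α + m))) (Ici 0) μ := by
  have hxt : ∀ᵐ t ∂(μ.restrict (Ici 0)), (0:ℝ) ≤ t := by
    filter_upwards [ae_restrict_mem (measurableSet_Ici : MeasurableSet (Ici (0:ℝ)))] with t ht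
    exact ht
  refine MeasureTheory.Integrable.mono (hint x hx) ?_ ?_
  · exact (hw.mul ((continuous_pow m).aestronglyMeasurable.restrict)).mul
      ((contOn_rpow x (-(α + m)) hx).aestronglyMeasurable measurableSet_Ici)
  · filter_upwards [hxt] with t ht
    have hpos : (0:ℝ) < x + t := by linarith
    have hkey : t ^ m * (x + t) ^ (-(α + (m:ℝ))) ≤ (x + t) ^ (-α) := by
      have he : (x + t) ^ (-(α + (m:ℝ))) = (x + t) ^ (-α) * ((x + t) ^ m)⁻¹ := by
        rw [show -(α + (m:ℝ)) = -α + (-(m:ℝ)) by ring, Real.rpow_add hpos]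
        congr 1
        rw [Real.rpow_neg hpos.le, Real.rpow_natCast]
      rw [he, ← mul_assoc, mul_comm (t ^ m), mul_assoc]
      have h1 : t ^ m * ((x + t) ^ m)⁻¹ ≤ 1 := by
        rw [← div_eq_mul_inv, div_le_one (by positivity)]
        exact pow_le_pow_left₀ ht (by linarith) m
      have h2 : (0:ℝ) < (x + t) ^ (-α) := Real.rpow_pos_of_pos hpos _
      nlinarith
    have h2 : (0:ℝ) ≤ (x + t) ^ (-α) := (Real.rpow_pos_of_pos hpos _).le
    calc ‖w t * t ^ m * (x + t) ^ (-(α + m))‖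
        = |w t| * (t ^ m * (x + t) ^ (-(α + m))) := by
          rw [Real.norm_eq_abs, abs_mul, abs_mul, abs_of_nonneg (pow_nonneg ht m),
            abs_of_nonneg (Real.rpow_pos_of_pos hpos _).le, mul_assoc]
      _ ≤ |w t| * (x + t) ^ (-α) := mul_le_mul_of_nonneg_left hkey (abs_nonneg _)
      _ = ‖w t * (x + t) ^ (-α)‖ := by
          rw [Real.norm_eq_abs, abs_mul, abs_of_nonneg h2]
theorem Janalytic (μ : Measure ℝ) (w : ℝ → ℝ)
    (hw : AEStronglyMeasurable w (μ.restrict (Ici 0))) {α : ℝ} (hα : 0 < α)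
    (hint : ∀ y : ℝ, 0 < y → IntegrableOn (fun t => w t * (y + t) ^ (-α)) (Ici 0) μ) :
    AnalyticOnNhd ℝ (fun y => ∫ t in Ici 0, w t * (y + t) ^ (-α) ∂μ) (Ioi 0) := by
  have hxt : ∀ᵐ t ∂(μ.restrict (Ici 0)), (0:ℝ) ≤ t := by
    filter_upwards [ae_restrict_mem (measurableSet_Ici : MeasurableSet (Ici (0:ℝ)))] with t ht
    exact ht
  set U : Set ℂ := Complex.re ⁻¹' (Ioi 0) with hU
  have hUopen : IsOpen U := isOpen_Ioi.preimage Complex.continuous_re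
  set G : ℂ → ℂ := fun z => ∫ t in Ici 0, ((w t : ℂ)) * (z + (t:ℂ)) ^ (-(α:ℂ)) ∂μ with hG
  have hwC : AEStronglyMeasurable (fun t => ((w t : ℝ) : ℂ)) (μ.restrict (Ici 0)) :=
    Complex.continuous_ofReal.comp_aestronglyMeasurable hw
  have hslit : ∀ (z : ℂ) (t : ℝ), 0 < z.re → 0 ≤ t → (z + (t:ℂ)) ∈ Complex.slitPlane := by
    intro z t hz ht
    refine Complex.mem_slitPlane_iff.mpr (Or.inl ?_)
    simp only [Complex.add_re, Complex.ofReal_re]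
    linarith
  have haesm : ∀ (z : ℂ) (c : ℂ), 0 < z.re →
      AEStronglyMeasurable (fun t : ℝ => ((w t : ℂ)) * (z + (t:ℂ)) ^ c)
        (μ.restrict (Ici 0)) := by
    intro z c hz
    refine hwC.mul (ContinuousOn.aestronglyMeasurable
      (ContinuousOn.cpow_const
        ((continuous_const.add Complex.continuous_ofReal).continuousOn)
        (fun t ht => hslit z t hz ht)) measurableSet_Ici)
  have hnorm : ∀ (z : ℂ) (t : ℝ) (p : ℝ), ‖(z + (t:ℂ)) ^ ((p:ℂ))‖
      = ‖z + (t:ℂ)‖ ^ p := by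
    intro z t p
    rw [Complex.norm_cpow_real]
  have hrebound : ∀ (z : ℂ) (t : ℝ), z.re + t ≤ ‖z + (t:ℂ)‖ := by
    intro z t
    have := Complex.re_le_norm (z + (t:ℂ))
    simpa [Complex.add_re, Complex.ofReal_re] using this
  have hFint : ∀ (z : ℂ), 0 < z.re →
      Integrable (fun t => ((w t : ℂ)) * (z + (t:ℂ)) ^ (-(α:ℂ))) (μ.restrict (Ici 0)) := by
    intro z hz
    refine MeasureTheory.Integrable.mono (hint z.re hz) (haesm z _ hz) ?_
    filter_upwards [hxt] with t ht
    have h1 : (0:ℝ) < z.re + t := by linarith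
    calc ‖(w t : ℂ) * (z + (t:ℂ)) ^ (-(α:ℂ))‖
        = |w t| * ‖z + (t:ℂ)‖ ^ (-α) := by
          rw [norm_mul, Complex.norm_real, Real.norm_eq_abs,
            show (-(α:ℂ)) = ((-α : ℝ) : ℂ) by push_cast; ring, hnorm]
      _ ≤ |w t| * (z.re + t) ^ (-α) := by
          refine mul_le_mul_of_nonneg_left ?_ (abs_nonneg _)
          exact Real.rpow_le_rpow_of_nonpos h1 (hrebound z t) (by linarith)
      _ = ‖w t * (z.re + t) ^ (-α)‖ := by
          rw [Real.norm_eq_abs, abs_mul, abs_of_nonneg (Real.rpow_pos_of_pos h1 _).le]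
  have hdiff : DifferentiableOn ℂ G U := by
    intro z₀ hz₀m
    have hz₀ : 0 < z₀.re := hz₀m
    have hrpos : 0 < z₀.re / 2 := by linarith
    have hmeas : ∀ᶠ z in 𝓝 z₀, AEStronglyMeasurable
        (fun t : ℝ => ((w t : ℂ)) * (z + (t:ℂ)) ^ (-(α:ℂ))) (μ.restrict (Ici 0)) := by
      have : ∀ᶠ z in 𝓝 z₀, z ∈ U := hUopen.eventually_mem hz₀m
      filter_upwards [this] with z hz
      exact haesm z _ hz
    have hF'meas : AEStronglyMeasurable
        (fun t : ℝ => ((w t : ℂ)) * ((z₀ + (t:ℂ)) ^ (-(α:ℂ) - 1) * (-(α:ℂ))))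
        (μ.restrict (Ici 0)) := by
      have := (haesm z₀ (-(α:ℂ) - 1) hz₀).mul_const (-(α:ℂ))
      exact this.congr (Eventually.of_forall fun t => by ring)
    have hbound : ∀ᵐ t ∂(μ.restrict (Ici 0)), ∀ z ∈ ball z₀ (z₀.re / 2),
        ‖(w t : ℂ) * ((z + (t:ℂ)) ^ (-(α:ℂ) - 1) * (-(α:ℂ)))‖
          ≤ (α * (2 / z₀.re)) * |w t * (z₀.re / 2 + t) ^ (-α)| := by
      filter_upwards [hxt] with t ht
      intro z hz
      have hzre : z₀.re / 2 < z.re := by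
        have h1 : |(z - z₀).re| ≤ ‖z - z₀‖ := Complex.abs_re_le_norm _
        have h2 : ‖z - z₀‖ < z₀.re / 2 := by
          simpa [Complex.dist_eq] using mem_ball.mp hz
        have := abs_lt.mp (lt_of_le_of_lt h1 h2)
        simp only [Complex.sub_re] at this
        linarith [this.1]
      have h1 : (0:ℝ) < z₀.re / 2 + t := by linarith
      have h2 : (0:ℝ) < z.re + t := by linarith
      have hb0 : ‖z + (t:ℂ)‖ ^ (-α - 1) ≤ (z₀.re / 2 + t) ^ (-α - 1) := by
        refine Real.rpow_le_rpow_of_nonpos h1 ?_ (by linarith)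
        calc z₀.re / 2 + t ≤ z.re + t := by linarith
          _ ≤ ‖z + (t:ℂ)‖ := hrebound z t
      have hb2 : (z₀.re / 2 + t) ^ (-α - 1) ≤ (z₀.re / 2 + t) ^ (-α) * (2 / z₀.re) := by
        rw [show -α - 1 = -α + (-1) by ring, Real.rpow_add h1, Real.rpow_neg_one]
        have hle : (z₀.re / 2 + t)⁻¹ ≤ (z₀.re / 2)⁻¹ := by
          apply inv_anti₀ hrpos
          linarith
        have h3 : (0:ℝ) < (z₀.re / 2 + t) ^ (-α) := Real.rpow_pos_of_pos h1 _
        have he : (z₀.re / 2 : ℝ)⁻¹ = 2 / z₀.re := by rw [inv_div]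
        rw [← he]
        exact mul_le_mul_of_nonneg_left hle h3.le
      calc ‖(w t : ℂ) * ((z + (t:ℂ)) ^ (-(α:ℂ) - 1) * (-(α:ℂ)))‖
          = |w t| * (‖z + (t:ℂ)‖ ^ (-α - 1) * α) := by
            rw [norm_mul, norm_mul, Complex.norm_real, Real.norm_eq_abs,
              show (-(α:ℂ) - 1) = ((-α - 1 : ℝ) : ℂ) by push_cast; ring, hnorm,
              show (-(α:ℂ)) = ((-α : ℝ) : ℂ) by push_cast; ring, Complex.norm_real,
              Real.norm_eq_abs, abs_neg, abs_of_pos hα]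
        _ ≤ |w t| * (((z₀.re / 2 + t) ^ (-α) * (2 / z₀.re)) * α) := by
            refine mul_le_mul_of_nonneg_left ?_ (abs_nonneg _)
            exact mul_le_mul_of_nonneg_right (hb0.trans hb2) hα.le
        _ = (α * (2 / z₀.re)) * |w t * (z₀.re / 2 + t) ^ (-α)| := by
            rw [abs_mul, abs_of_pos (Real.rpow_pos_of_pos h1 (-α))]
            ring
    have hbint : Integrable (fun t => (α * (2 / z₀.re)) * |w t * (z₀.re / 2 + t) ^ (-α)|)
        (μ.restrict (Ici 0)) := ((hint (z₀.re / 2) hrpos).abs).const_mul _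
    have hdf : ∀ᵐ t ∂(μ.restrict (Ici 0)), ∀ z ∈ ball z₀ (z₀.re / 2),
        HasDerivAt (fun z : ℂ => (w t : ℂ) * (z + (t:ℂ)) ^ (-(α:ℂ)))
          ((w t : ℂ) * ((z + (t:ℂ)) ^ (-(α:ℂ) - 1) * (-(α:ℂ)))) z := by
      filter_upwards [hxt] with t ht
      intro z hz
      have hzre : z₀.re / 2 < z.re := by
        have h1 : |(z - z₀).re| ≤ ‖z - z₀‖ := Complex.abs_re_le_norm _
        have h2 : ‖z - z₀‖ < z₀.re / 2 := by
          simpa [Complex.dist_eq] using mem_ball.mp hz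
        have := abs_lt.mp (lt_of_le_of_lt h1 h2)
        simp only [Complex.sub_re] at this
        linarith [this.1]
      have hmem : (z + (t:ℂ)) ∈ Complex.slitPlane := by
        refine Complex.mem_slitPlane_iff.mpr (Or.inl ?_)
        simp only [Complex.add_re, Complex.ofReal_re]
        linarith
      have hd : HasDerivAt (fun z : ℂ => (z + (t:ℂ)) ^ (-(α:ℂ)))
          ((-(α:ℂ)) * (z + (t:ℂ)) ^ (-(α:ℂ) - 1) * 1) z :=
        ((hasDerivAt_id z).add_const ((t:ℂ))).cpow_const hmem
      have hd' := hd.const_mul ((w t : ℂ))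
      refine hd'.congr_deriv ?_
      ring
    have hkey := hasDerivAt_integral_of_dominated_loc_of_deriv_le
      (μ := μ.restrict (Ici 0))
      (F := fun z t => ((w t : ℂ)) * (z + (t:ℂ)) ^ (-(α:ℂ)))
      (F' := fun z t => ((w t : ℂ)) * ((z + (t:ℂ)) ^ (-(α:ℂ) - 1) * (-(α:ℂ))))
      (x₀ := z₀) (s := ball z₀ (z₀.re / 2))
      (bound := fun t => (α * (2 / z₀.re)) * |w t * (z₀.re / 2 + t) ^ (-α)|)
      (ball_mem_nhds z₀ hrpos) hmeas (hFint z₀ hz₀) hF'meas hbound hbint hdf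
    exact (hkey.2.differentiableAt).differentiableWithinAt
  have hGa : AnalyticOnNhd ℂ G U := hdiff.analyticOnNhd hUopen
  have hmap : MapsTo (fun y : ℝ => (y : ℂ)) (Ioi 0) U := by
    intro y hy
    simp only [hU, mem_preimage, Complex.ofReal_re, mem_Ioi]
    exact hy
  have hofReal : AnalyticOnNhd ℝ (fun y : ℝ => (y:ℂ)) (Ioi 0) := by
    intro y hy
    exact Complex.ofRealCLM.analyticAt y
  have hrestr : AnalyticOnNhd ℝ (G ∘ (fun y : ℝ => (y:ℂ))) (Ioi 0) :=
    (hGa.restrictScalars).comp hofReal hmap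
  have hre : AnalyticOnNhd ℝ (Complex.reCLM ∘ (G ∘ (fun y : ℝ => (y:ℂ))))
      (Ioi 0) :=
    (Complex.reCLM.analyticOnNhd (univ : Set ℂ)).comp hrestr (mapsTo_univ _ _)
  refine hre.congr isOpen_Ioi ?_
  intro y hy
  have hy' : (0:ℝ) < y := hy
  have hGy : G (y:ℂ) = ((∫ t in Ici 0, w t * (y + t) ^ (-α) ∂μ : ℝ) : ℂ) := by
    simp only [hG]
    rw [show ((∫ t in Ici 0, w t * (y + t) ^ (-α) ∂μ : ℝ) : ℂ)
        = ∫ t in Ici 0, ((w t * (y + t) ^ (-α) : ℝ) : ℂ) ∂μ from (integral_ofReal).symm]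
    apply integral_congr_ae
    filter_upwards [hxt] with t ht
    have h1 : (0:ℝ) ≤ y + t := by linarith
    rw [Complex.ofReal_mul, Complex.ofReal_cpow h1]
    push_cast
    ring
  simp only [Function.comp_apply, hGy]
  simp
theorem Jsmooth (μ : Measure ℝ) (w : ℝ → ℝ)
    (hw : AEStronglyMeasurable w (μ.restrict (Ici 0))) {α : ℝ} (hα : 0 < α)
    (hint : ∀ y : ℝ, 0 < y → IntegrableOn (fun t => w t * (y + t) ^ (-α)) (Ici 0) μ)
    (n : WithTop ℕ∞) :
    ContDiffOn ℝ n (fun y => ∫ t in Ici 0, w t * (y + t) ^ (-α) ∂μ) (Ioi 0) :=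
  (Janalytic μ w hw hα hint).contDiffOn (uniqueDiffOn_Ioi 0)

theorem Jiter (μ : Measure ℝ) (w : ℝ → ℝ)
    (hw : AEStronglyMeasurable w (μ.restrict (Ici 0))) :
    ∀ (n : ℕ) (α : ℝ), 0 < α →
    (∀ y : ℝ, 0 < y → IntegrableOn (fun t => w t * (y + t) ^ (-α)) (Ici 0) μ) →
    ∀ x : ℝ, 0 < x →
    iteratedDerivWithin n (fun y => ∫ t in Ici 0, w t * (y + t) ^ (-α) ∂μ) (Ioi 0) x
      = (-1) ^ n * (∏ i ∈ Finset.range n, (α + i)) *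
          ∫ t in Ici 0, w t * (x + t) ^ (-(α + n)) ∂μ := by
  intro n
  induction n with
  | zero =>
    intro α hα hint x hx
    simp [iteratedDerivWithin_zero]
  | succ n IH =>
    intro α hα hint x hx
    have hint1 : ∀ y : ℝ, 0 < y →
        IntegrableOn (fun t => w t * (y + t) ^ (-(α + 1))) (Ici 0) μ :=
      fun y hy => (stieltjes_deriv_step μ w hw hα hint hy).1
    rw [iteratedDerivWithin_succ']
    have heq : Set.EqOn
        (derivWithin (fun y => ∫ t in Ici 0, w t * (y + t) ^ (-α) ∂μ) (Ioi 0))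
        (fun y => (-α) * ∫ t in Ici 0, w t * (y + t) ^ (-(α + 1)) ∂μ) (Ioi 0) := by
      intro y hy
      have hd := (stieltjes_deriv_step μ w hw hα hint (mem_Ioi.mp hy)).2
      exact hd.hasDerivWithinAt.derivWithin ((uniqueDiffOn_Ioi 0) y hy)
    rw [iteratedDerivWithin_congr heq hx]
    rw [iteratedDerivWithin_const_mul (mem_Ioi.mpr hx) (uniqueDiffOn_Ioi 0) (-α)
      ((Jsmooth μ w hw (by positivity) hint1 n) x hx)]
    rw [IH (α + 1) (by positivity) hint1 x hx]
    have e1 : (α + 1 + (n:ℝ)) = α + ((n:ℕ) + 1 : ℕ) := by push_cast; ring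
    simp only [e1]
    have eP : ∏ i ∈ Finset.range (n + 1), (α + (i:ℝ))
        = α * ∏ i ∈ Finset.range n, (α + 1 + (i:ℝ)) := by
      rw [Finset.prod_range_succ']
      have : ∀ i ∈ Finset.range n, (α + ((i:ℕ) + 1 : ℕ)) = α + 1 + (i:ℝ) := by
        intro i _
        push_cast
        ring
      rw [Finset.prod_congr rfl this]
      simp [mul_comm]
    rw [eP]
    ring
lemma rpow_contDiffOn (p : ℝ) (n : WithTop ℕ∞) :
    ContDiffOn ℝ n (fun y : ℝ => y ^ p) (Ioi 0) :=
  fun y hy => (Real.contDiffAt_rpow_const_of_ne (ne_of_gt (mem_Ioi.mp hy))).contDiffWithinAt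

theorem riter : ∀ (n : ℕ) (b : ℝ) (x : ℝ), 0 < x →
    iteratedDerivWithin n (fun y : ℝ => y ^ b) (Ioi 0) x
      = (∏ l ∈ Finset.range n, (b - l)) * x ^ (b - n) := by
  intro n
  induction n with
  | zero => intro b x hx; simp
  | succ n IH =>
    intro b x hx
    rw [iteratedDerivWithin_succ']
    have heq : EqOn (derivWithin (fun y : ℝ => y ^ b) (Ioi 0))
        (fun y : ℝ => b * y ^ (b - 1)) (Ioi 0) := by
      intro y hy
      have hd : HasDerivAt (fun y : ℝ => y ^ b) (1 * b * y ^ (b - 1)) y :=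
        (hasDerivAt_id y).rpow_const (Or.inl (ne_of_gt (mem_Ioi.mp hy)))
      rw [hd.hasDerivWithinAt.derivWithin ((uniqueDiffOn_Ioi 0) y hy), one_mul]
    rw [iteratedDerivWithin_congr heq (mem_Ioi.mpr hx)]
    rw [iteratedDerivWithin_const_mul (mem_Ioi.mpr hx) (uniqueDiffOn_Ioi 0) b
      (rpow_contDiffOn (b - 1) n x hx)]
    rw [IH (b - 1) x hx]
    have e1 : b - 1 - (n:ℝ) = b - ((n:ℕ) + 1 : ℕ) := by push_cast; ring
    rw [e1]
    have eP : ∏ l ∈ Finset.range (n + 1), (b - (l:ℝ))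
        = b * ∏ l ∈ Finset.range n, (b - 1 - (l:ℝ)) := by
      rw [Finset.prod_range_succ']
      have : ∀ l ∈ Finset.range n, (b - ((l:ℕ) + 1 : ℕ)) = b - 1 - (l:ℝ) := by
        intro l _
        push_cast
        ring
      rw [Finset.prod_congr rfl this]
      simp [mul_comm]
    rw [eP]
    ring

theorem core (μ : Measure ℝ) (w : ℝ → ℝ)
    (hw : AEStronglyMeasurable w (μ.restrict (Ici 0))) :
    ∀ (k : ℕ) (α : ℝ), 0 < α →
    (∀ y : ℝ, 0 < y → IntegrableOn (fun t => w t * (y + t) ^ (-α)) (Ici 0) μ) →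
    ∀ x : ℝ, 0 < x →
    iteratedDerivWithin k
        (fun y => y ^ (α - 1 + (k:ℝ)) * ∫ t in Ici 0, w t * (y + t) ^ (-α) ∂μ) (Ioi 0) x
      = (∏ i ∈ Finset.range k, (α + i)) *
          (x ^ (α - 1) * ∫ t in Ici 0, w t * t ^ k * (x + t) ^ (-(α + k)) ∂μ) := by
  intro k
  induction k with
  | zero =>
    intro α hα hint x hx
    simp [iteratedDerivWithin_zero]
  | succ k IH =>
    intro α hα hint x hx
    have hα1 : (0:ℝ) < α + 1 := by linarith
    have hint1 : ∀ y : ℝ, 0 < y →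
        IntegrableOn (fun t => w t * (y + t) ^ (-(α + 1))) (Ici 0) μ :=
      fun y hy => (stieltjes_deriv_step μ w hw hα hint hy).1
    rw [iteratedDerivWithin_succ']
    have heq : EqOn
        (derivWithin (fun y => y ^ (α - 1 + ((k + 1 : ℕ):ℝ)) *
          ∫ t in Ici 0, w t * (y + t) ^ (-α) ∂μ) (Ioi 0))
        (fun y => (α + (k:ℝ)) * (y ^ (α - 1 + (k:ℝ)) * ∫ t in Ici 0, w t * (y + t) ^ (-α) ∂μ)
          + (-α) * (y ^ (α + 1 - 1 + (k:ℝ)) *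
              ∫ t in Ici 0, w t * (y + t) ^ (-(α + 1)) ∂μ)) (Ioi 0) := by
      intro y hy
      have hy0 : (0:ℝ) < y := mem_Ioi.mp hy
      have hr : HasDerivAt (fun y : ℝ => y ^ (α - 1 + ((k + 1 : ℕ):ℝ)))
          (1 * (α - 1 + ((k + 1 : ℕ):ℝ)) * y ^ ((α - 1 + ((k + 1 : ℕ):ℝ)) - 1)) y :=
        (hasDerivAt_id y).rpow_const (Or.inl hy0.ne')
      have hJ : HasDerivAt (fun y => ∫ t in Ici 0, w t * (y + t) ^ (-α) ∂μ)
          (-α * ∫ t in Ici 0, w t * (y + t) ^ (-(α + 1)) ∂μ) y :=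
        (stieltjes_deriv_step μ w hw hα hint hy0).2
      have hp := hr.fun_mul hJ
      rw [hp.hasDerivWithinAt.derivWithin ((uniqueDiffOn_Ioi 0) y hy)]
      rw [show (α - 1 + ((k + 1 : ℕ):ℝ)) - 1 = α - 1 + (k:ℝ) by push_cast; ring,
        show (α - 1 + ((k + 1 : ℕ):ℝ)) = α + 1 - 1 + (k:ℝ) by push_cast; ring]
      ring
    rw [iteratedDerivWithin_congr heq (mem_Ioi.mpr hx)]
    have hcd1 : ContDiffOn ℝ k
        (fun y : ℝ => (α + (k:ℝ)) * (y ^ (α - 1 + (k:ℝ)) *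
          ∫ t in Ici 0, w t * (y + t) ^ (-α) ∂μ)) (Ioi 0) :=
      contDiffOn_const.mul ((rpow_contDiffOn _ _).mul (Jsmooth μ w hw hα hint k))
    have hcd2 : ContDiffOn ℝ k
        (fun y : ℝ => (-α) * (y ^ (α + 1 - 1 + (k:ℝ)) *
          ∫ t in Ici 0, w t * (y + t) ^ (-(α + 1)) ∂μ)) (Ioi 0) :=
      contDiffOn_const.mul ((rpow_contDiffOn _ _).mul (Jsmooth μ w hw hα1 hint1 k))
    rw [show (fun y => (α + (k:ℝ)) * (y ^ (α - 1 + (k:ℝ)) *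
          ∫ t in Ici 0, w t * (y + t) ^ (-α) ∂μ)
        + (-α) * (y ^ (α + 1 - 1 + (k:ℝ)) *
          ∫ t in Ici 0, w t * (y + t) ^ (-(α + 1)) ∂μ))
      = ((fun y : ℝ => (α + (k:ℝ)) * (y ^ (α - 1 + (k:ℝ)) *
          ∫ t in Ici 0, w t * (y + t) ^ (-α) ∂μ))
        + (fun y : ℝ => (-α) * (y ^ (α + 1 - 1 + (k:ℝ)) *
          ∫ t in Ici 0, w t * (y + t) ^ (-(α + 1)) ∂μ))) from rfl]
    rw [iteratedDerivWithin_add (mem_Ioi.mpr hx) (uniqueDiffOn_Ioi 0) (hcd1 x hx) (hcd2 x hx)]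
    rw [iteratedDerivWithin_const_mul (mem_Ioi.mpr hx) (uniqueDiffOn_Ioi 0) (α + (k:ℝ))
      (((rpow_contDiffOn _ _).mul (Jsmooth μ w hw hα hint k)) x hx)]
    rw [iteratedDerivWithin_const_mul (mem_Ioi.mpr hx) (uniqueDiffOn_Ioi 0) (-α)
      (((rpow_contDiffOn _ _).mul (Jsmooth μ w hw hα1 hint1 k)) x hx)]
    rw [IH α hα hint x hx]
    rw [show α + 1 - 1 + (k:ℝ) = (α + 1) - 1 + (k:ℝ) from rfl]
    rw [IH (α + 1) hα1 hint1 x hx]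
    have hx1 : x ^ (α + 1 - 1) = x ^ (α - 1) * x := by
      rw [show α + 1 - 1 = (α - 1) + 1 by ring, Real.rpow_add hx, Real.rpow_one]
    rw [hx1]
    have hI1 := int_weight μ w hw hα hint k hx
    have hI2 := int_weight μ w hw hα1 hint1 k hx
    have hkey : (∫ t in Ici 0, w t * t ^ k * (x + t) ^ (-(α + (k:ℝ))) ∂μ)
        - x * ∫ t in Ici 0, w t * t ^ k * (x + t) ^ (-(α + 1 + (k:ℝ))) ∂μ
        = ∫ t in Ici 0, w t * t ^ (k + 1) * (x + t) ^ (-(α + ((k + 1 : ℕ):ℝ))) ∂μ := by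
      rw [← integral_const_mul x]
      rw [← integral_sub hI1 (hI2.const_mul x)]
      apply integral_congr_ae
      have hxt : ∀ᵐ t ∂(μ.restrict (Ici 0)), (0:ℝ) ≤ t := by
        filter_upwards [ae_restrict_mem (measurableSet_Ici : MeasurableSet (Ici (0:ℝ)))] with t ht
        exact ht
      filter_upwards [hxt] with t ht
      have hpos : (0:ℝ) < x + t := by linarith
      have h1 : (x + t) ^ (-(α + (k:ℝ))) = (x + t) * (x + t) ^ (-(α + 1 + (k:ℝ))) := by
        rw [show -(α + (k:ℝ)) = 1 + -(α + 1 + (k:ℝ)) by ring, Real.rpow_add hpos,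
          Real.rpow_one]
      have h2 : (-(α + ((k + 1 : ℕ):ℝ))) = -(α + 1 + (k:ℝ)) := by push_cast; ring
      rw [h1, h2]
      ring
    have hP : ∏ i ∈ Finset.range (k + 1), (α + (i:ℝ))
        = (α + (k:ℝ)) * ∏ i ∈ Finset.range k, (α + (i:ℝ)) := by
      rw [Finset.prod_range_succ]; ring
    have hQ : ∏ i ∈ Finset.range (k + 1), (α + (i:ℝ))
        = α * ∏ i ∈ Finset.range k, (α + 1 + (i:ℝ)) := by
      rw [Finset.prod_range_succ']
      have : ∀ i ∈ Finset.range k, (α + ((i:ℕ) + 1 : ℕ)) = α + 1 + (i:ℝ) := by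
        intro i _
        push_cast
        ring
      rw [Finset.prod_congr rfl this]
      simp [mul_comm]
    rw [← hkey, hP]
    have hQ' : α * ∏ i ∈ Finset.range k, (α + 1 + (i:ℝ))
        = (α + (k:ℝ)) * ∏ i ∈ Finset.range k, (α + (i:ℝ)) := hQ.symm.trans hP
    linear_combination (-(x ^ (α - 1) * x *
      (∫ t in Ici 0, w t * t ^ k * (x + t) ^ (-(α + 1 + (k:ℝ))) ∂μ))) * hQ'
end CkAux

open CkAux


open CkAux

/-- A function is completely monotonic on `(0, ∞)`. -/
def CompletelyMonotonic (φ : ℝ → ℝ) : Prop :=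
  ContDiffOn ℝ (⊤ : ℕ∞) φ (Set.Ioi 0) ∧
    ∀ n : ℕ, ∀ x : ℝ, 0 < x → 0 ≤ (-1 : ℝ) ^ n * iteratedDerivWithin n φ (Set.Ioi 0) x

theorem ck_completely_monotonic_of_stieltjes (lam : ℝ) (hlam : 0 < lam) (f : ℝ → ℝ)
    (c : ℝ) (hc : 0 ≤ c) (μ : Measure ℝ)
    (hμ : ∀ x : ℝ, 0 < x → IntegrableOn (fun t => (x + t) ^ (-lam)) (Set.Ici 0) μ)
    (hrep : ∀ x : ℝ, 0 < x → f x = c + ∫ t in Set.Ici 0, (x + t) ^ (-lam) ∂μ) :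
    ∀ k : ℕ, CompletelyMonotonic
      (fun x => x ^ (1 - lam) *
        iteratedDerivWithin k (fun t => t ^ (lam - 1 + (k : ℝ)) * f t) (Set.Ioi 0) x) := by
  intro k
  have uD := uniqueDiffOn_Ioi (0:ℝ)
  have hw1 : AEStronglyMeasurable (fun _ : ℝ => (1:ℝ)) (μ.restrict (Ici 0)) :=
    aestronglyMeasurable_const
  have hint1 : ∀ y : ℝ, 0 < y →
      IntegrableOn (fun t => (1:ℝ) * (y + t) ^ (-lam)) (Ici 0) μ := by
    intro y hy
    simpa [one_mul] using hμ y hy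
  have hw2 : AEStronglyMeasurable (fun t : ℝ => (1:ℝ) * t ^ k) (μ.restrict (Ici 0)) :=
    ((continuous_const.mul (continuous_pow k)).aestronglyMeasurable).restrict
  have hα2 : (0:ℝ) < lam + (k:ℝ) := by positivity
  have hint2 : ∀ y : ℝ, 0 < y →
      IntegrableOn (fun t => (1:ℝ) * t ^ k * (y + t) ^ (-(lam + (k:ℝ)))) (Ici 0) μ :=
    fun y hy => int_weight μ (fun _ => (1:ℝ)) hw1 hlam hint1 k hy
  have hΛ : (0:ℝ) ≤ ∏ i ∈ Finset.range k, (lam + (i:ℝ)) :=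
    Finset.prod_nonneg fun i _ => by positivity
  have hInonneg : ∀ x : ℝ, 0 < x →
      0 ≤ ∫ t in Ici 0, (1:ℝ) * t ^ k * (x + t) ^ (-(lam + (k:ℝ))) ∂μ := by
    intro x hx
    refine setIntegral_nonneg measurableSet_Ici fun t ht => ?_
    have ht' : (0:ℝ) ≤ t := ht
    have : (0:ℝ) ≤ x + t := by linarith
    positivity
  have hgEq : Set.EqOn (fun t => t ^ (lam - 1 + (k : ℝ)) * f t)
      ((fun y : ℝ => c * y ^ (lam - 1 + (k:ℝ))) +
        (fun y : ℝ => y ^ (lam - 1 + (k:ℝ)) * ∫ t in Ici 0, (1:ℝ) * (y + t) ^ (-lam) ∂μ))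
      (Ioi 0) := by
    intro y hy
    have hy0 : (0:ℝ) < y := hy
    simp only [Pi.add_apply]
    rw [hrep y hy0]
    simp only [one_mul]
    ring
  have hA : ContDiffOn ℝ k (fun y : ℝ => c * y ^ (lam - 1 + (k:ℝ))) (Ioi 0) :=
    contDiffOn_const.mul (rpow_contDiffOn _ _)
  have hB : ContDiffOn ℝ k
      (fun y : ℝ => y ^ (lam - 1 + (k:ℝ)) * ∫ t in Ici 0, (1:ℝ) * (y + t) ^ (-lam) ∂μ)
      (Ioi 0) :=
    (rpow_contDiffOn _ _).mul (Jsmooth μ (fun _ => (1:ℝ)) hw1 hlam hint1 k)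
  have hPl : ∏ l ∈ Finset.range k, (lam - 1 + (k:ℝ) - (l:ℝ))
      = ∏ i ∈ Finset.range k, (lam + (i:ℝ)) := by
    have h1 : ∀ l ∈ Finset.range k, lam - 1 + (k:ℝ) - (l:ℝ) = lam + ((k - 1 - l : ℕ):ℝ) := by
      intro l hl
      have hlk := Finset.mem_range.mp hl
      have h2 : (k - 1 - l : ℕ) = k - (1 + l) := by omega
      rw [h2, Nat.cast_sub (by omega : 1 + l ≤ k)]
      push_cast
      ring
    rw [Finset.prod_congr rfl h1, Finset.prod_range_reflect (fun i => lam + (i:ℝ)) k]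
  have hEqOn : Set.EqOn
      (fun x => x ^ (1 - lam) *
        iteratedDerivWithin k (fun t => t ^ (lam - 1 + (k : ℝ)) * f t) (Set.Ioi 0) x)
      (fun x => (∏ i ∈ Finset.range k, (lam + (i:ℝ))) *
        (c + ∫ t in Ici 0, (1:ℝ) * t ^ k * (x + t) ^ (-(lam + (k:ℝ))) ∂μ)) (Ioi 0) := by
    intro x hx
    have hx0 : (0:ℝ) < x := hx
    simp only []
    rw [iteratedDerivWithin_congr hgEq hx]
    rw [iteratedDerivWithin_add hx uD (hA x hx) (hB x hx)]
    rw [iteratedDerivWithin_const_mul hx uD c (rpow_contDiffOn _ _ x hx)]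
    rw [riter k (lam - 1 + (k:ℝ)) x hx0]
    rw [core μ (fun _ => (1:ℝ)) hw1 k lam hlam hint1 x hx0]
    rw [hPl, show lam - 1 + (k:ℝ) - (k:ℝ) = lam - 1 by ring]
    have hmul : x ^ (1 - lam) * x ^ (lam - 1) = 1 := by
      rw [← Real.rpow_add hx0]
      norm_num
    linear_combination ((∏ i ∈ Finset.range k, (lam + (i:ℝ))) *
      (c + ∫ t in Ici 0, (1:ℝ) * t ^ k * (x + t) ^ (-(lam + (k:ℝ))) ∂μ)) * hmul
  have hIan := Janalytic μ (fun t : ℝ => (1:ℝ) * t ^ k) hw2 hα2 hint2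
  constructor
  · -- smoothness
    refine ContDiffOn.congr ?_ hEqOn
    exact (analyticOnNhd_const.mul (analyticOnNhd_const.add hIan)).contDiffOn uD
  · -- signs
    intro n x hx
    rw [iteratedDerivWithin_congr hEqOn (mem_Ioi.mpr hx)]
    have hψEq : Set.EqOn
        (fun x => (∏ i ∈ Finset.range k, (lam + (i:ℝ))) *
          (c + ∫ t in Ici 0, (1:ℝ) * t ^ k * (x + t) ^ (-(lam + (k:ℝ))) ∂μ))
        (fun x => ((∏ i ∈ Finset.range k, (lam + (i:ℝ))) * c) +
          (∏ i ∈ Finset.range k, (lam + (i:ℝ))) *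
            ∫ t in Ici 0, (1:ℝ) * t ^ k * (x + t) ^ (-(lam + (k:ℝ))) ∂μ) (Ioi 0) := by
      intro y _
      ring
    rw [iteratedDerivWithin_congr hψEq (mem_Ioi.mpr hx)]
    cases n with
    | zero =>
      simp only [iteratedDerivWithin_zero, pow_zero, one_mul]
      have h0 := hInonneg x hx
      simp only [one_mul] at h0
      nlinarith
    | succ n =>
      rw [iteratedDerivWithin_const_add (Nat.succ_pos n) _]
      rw [iteratedDerivWithin_const_mul (mem_Ioi.mpr hx) uD _
        (hIan.contDiffOn uD (n := (n + 1 : ℕ)) x hx)]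
      rw [Jiter μ (fun t : ℝ => (1:ℝ) * t ^ k) hw2 (n + 1) (lam + (k:ℝ)) hα2 hint2 x hx]
      have h2 : (0:ℝ) ≤ ∏ i ∈ Finset.range (n + 1), (lam + (k:ℝ) + (i:ℝ)) :=
        Finset.prod_nonneg fun i _ => by positivity
      have h3 : (0:ℝ) ≤ ∫ t in Ici 0,
          (1:ℝ) * t ^ k * (x + t) ^ (-(lam + (k:ℝ) + ((n + 1 : ℕ):ℝ))) ∂μ := by
        refine setIntegral_nonneg measurableSet_Ici fun t ht => ?_
        have ht' : (0:ℝ) ≤ t := ht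
        have : (0:ℝ) ≤ x + t := by linarith
        positivity
      have h4 : ((-1:ℝ)) ^ (n + 1) * ((-1:ℝ)) ^ (n + 1) = 1 := by
        rw [← mul_pow]
        norm_num
      have key : (-1:ℝ) ^ (n + 1) *
          ((∏ i ∈ Finset.range k, (lam + (i:ℝ))) *
            ((-1) ^ (n + 1) * (∏ i ∈ Finset.range (n + 1), (lam + (k:ℝ) + (i:ℝ))) *
              ∫ t in Ici 0, (1:ℝ) * t ^ k * (x + t) ^ (-(lam + (k:ℝ) + ((n + 1 : ℕ):ℝ))) ∂μ))
          = ((-1:ℝ) ^ (n + 1) * (-1:ℝ) ^ (n + 1)) *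
            ((∏ i ∈ Finset.range k, (lam + (i:ℝ))) *
              ((∏ i ∈ Finset.range (n + 1), (lam + (k:ℝ) + (i:ℝ))) *
                ∫ t in Ici 0, (1:ℝ) * t ^ k * (x + t) ^ (-(lam + (k:ℝ) + ((n + 1 : ℕ):ℝ))) ∂μ)) := by
        ring
      rw [key, h4, one_mul]
      exact mul_nonneg hΛ (mul_nonneg h2 h3)
end

section
/- For a positive measure μ on (0,∞), the function s ↦ e^{-xs} s^{λ-1} ∫_s^∞ t^{-λ} dμ(t) is Lebesgue integrable on (0,∞) for some (equivalently, all) x > 0 if and only if ∫₀^1 dμ(t) < ∞ and ∫₁^∞ t^{-λ} dμ(t) < ∞. -/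
open Real Set MeasureTheory ENNReal

/-!
Exchanging the order of integration turns the double integral into
`∫_{t > 0} t^{-λ} γₓ(t) dμ(t)` with `γₓ(t) = ∫₀ᵗ e^{-xs} s^{λ-1} ds`; the exchange is the layer-cake
formula for the measure `t^{-λ} dμ` on `(0, ∞)`, which, unlike Tonelli, needs no σ-finiteness of `μ`.
On `(0, 1]` the kernel `t^{-λ} γₓ(t)` lies between `e^{-x}/λ` and `1/λ`; on `[1, ∞)` it lies
between `γₓ(1) t^{-λ}` and `(∫₀^∞ e^{-xs} s^{λ-1} ds) t^{-λ}`. So it is comparable to `min 1 t^{-λ}`,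
whose integral is `μ (0, 1] + ∫_{t > 1} t^{-λ} dμ` whatever `x > 0` is.
-/

theorem setLIntegral_Ioi_mul_tail_eq {g : ℝ → ℝ} (hg_int : ∀ t > 0, IntervalIntegrable g volume 0 t)
    (hg_nonneg : ∀ s > 0, 0 ≤ g s) {h : ℝ → ℝ≥0∞} (hh : Measurable h) (hh_fin : ∀ t, h t < ⊤)
    (μ : Measure ℝ) :
    ∫⁻ s in Ioi 0, ENNReal.ofReal (g s) * ∫⁻ t in Ioi s, h t ∂μ =
      ∫⁻ t in Ioi 0, h t * ENNReal.ofReal (∫ s in 0..t, g s) ∂μ := by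
  set ν := (μ.restrict (Ioi 0)).withDensity h
  have hν_tail : ∀ s > 0, ν (Ioi s) = ∫⁻ t in Ioi s, h t ∂μ := fun s hs => by
    rw [withDensity_apply _ measurableSet_Ioi, Measure.restrict_restrict measurableSet_Ioi,
      Ioi_inter_Ioi, sup_of_le_left hs.le]
  have hν_pos : ∀ᵐ t ∂ν, t ∈ Ioi (0 : ℝ) :=
    (withDensity_absolutelyContinuous _ _).ae_le (ae_restrict_mem measurableSet_Ioi)
  have hν_nonneg : 0 ≤ᵐ[ν] id := hν_pos.mono fun t ht => le_of_lt ht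
  have layercake := lintegral_comp_eq_lintegral_meas_lt_mul ν hν_nonneg aemeasurable_id hg_int
    ((ae_restrict_iff' measurableSet_Ioi).2 (.of_forall hg_nonneg))
  rw [lintegral_withDensity_eq_lintegral_mul_non_measurable _ hh (.of_forall hh_fin)] at layercake
  refine Eq.trans (setLIntegral_congr_fun measurableSet_Ioi fun s hs => ?_) layercake.symm
  rw [mul_comm]
  exact congrArg (· * _) (hν_tail s hs).symm

theorem lintegral_lt_top_iff_of_le_mul_of_mul_le {α : Type*} [MeasurableSpace α] {μ : Measure α}
    {f g : α → ℝ≥0∞} {c C : ℝ≥0∞} (hc : c ≠ 0) (hC : C ≠ ⊤)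
    (hle : ∀ᵐ a ∂μ, f a ≤ C * g a) (hge : ∀ᵐ a ∂μ, c * g a ≤ f a) :
    ∫⁻ a, f a ∂μ < ⊤ ↔ ∫⁻ a, g a ∂μ < ⊤ := by
  refine ⟨fun hf => ENNReal.lt_top_of_mul_ne_top_right ?_ hc, fun hg => ?_⟩
  · exact ((lintegral_const_mul_le c g).trans (lintegral_mono_ae hge)).trans_lt hf |>.ne
  · calc ∫⁻ a, f a ∂μ ≤ ∫⁻ a, C * g a ∂μ := lintegral_mono_ae hle
      _ = C * ∫⁻ a, g a ∂μ := lintegral_const_mul' C g hC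
      _ < ⊤ := ENNReal.mul_lt_top hC.lt_top hg

/-- `x ^ (-λ)` times the lower incomplete gamma function `γ(λ, x t)`. -/
noncomputable def scaledLowerGamma (x lam t : ℝ) : ℝ := ∫ s in 0..t, exp (-x * s) * s ^ (lam - 1)

section

variable {x lam : ℝ}

theorem intervalIntegrable_exp_mul_rpow (hlam : 0 < lam) (a b : ℝ) :
    IntervalIntegrable (fun s => exp (-x * s) * s ^ (lam - 1)) volume a b :=
  (intervalIntegral.intervalIntegrable_rpow' (by linarith)).continuousOn_mul (by fun_prop)

theorem integral_rpow_sub_one (hlam : 0 < lam) (t : ℝ) :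
    ∫ s in 0..t, s ^ (lam - 1) = t ^ lam / lam := by
  rw [integral_rpow (.inl (by linarith)), sub_add_cancel, zero_rpow hlam.ne', sub_zero]

theorem scaledLowerGamma_le (hlam : 0 < lam) (hx : 0 ≤ x) {t : ℝ} (ht : 0 ≤ t) :
    scaledLowerGamma x lam t ≤ t ^ lam / lam := by
  rw [← integral_rpow_sub_one hlam]
  refine intervalIntegral.integral_mono_on ht (intervalIntegrable_exp_mul_rpow hlam 0 t)
    (intervalIntegral.intervalIntegrable_rpow' (by linarith)) fun s hs => ?_
  have : exp (-x * s) ≤ 1 := exp_le_one_iff.2 (by nlinarith [hs.1])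
  nlinarith [rpow_nonneg hs.1 (lam - 1)]

theorem le_scaledLowerGamma (hlam : 0 < lam) (hx : 0 ≤ x) {t : ℝ} (ht₀ : 0 ≤ t) (ht₁ : t ≤ 1) :
    exp (-x) * (t ^ lam / lam) ≤ scaledLowerGamma x lam t := by
  rw [← integral_rpow_sub_one hlam, ← intervalIntegral.integral_const_mul]
  refine intervalIntegral.integral_mono_on ht₀
    ((intervalIntegral.intervalIntegrable_rpow' (by linarith)).const_mul _)
    (intervalIntegrable_exp_mul_rpow hlam 0 t) fun s hs => ?_
  have : exp (-x) ≤ exp (-x * s) := exp_le_exp.2 (by nlinarith [hs.2])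
  exact mul_le_mul_of_nonneg_right this (rpow_nonneg hs.1 _)

theorem scaledLowerGamma_mono (hlam : 0 < lam) {a b : ℝ} (ha : 0 ≤ a) (hab : a ≤ b) :
    scaledLowerGamma x lam a ≤ scaledLowerGamma x lam b :=
  intervalIntegral.integral_mono_interval le_rfl ha hab
    ((ae_restrict_iff' measurableSet_Ioc).2 (.of_forall fun _ hs =>
      mul_nonneg (exp_nonneg _) (rpow_nonneg hs.1.le _)))
    (intervalIntegrable_exp_mul_rpow hlam 0 b)

theorem scaledLowerGamma_le_integral_Ioi (hlam : 0 < lam) (hx : 0 < x) {t : ℝ} (ht : 0 ≤ t) :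
    scaledLowerGamma x lam t ≤ ∫ s in Ioi 0, exp (-x * s) * s ^ (lam - 1) := by
  have hint : IntegrableOn (fun s => exp (-x * s) * s ^ (lam - 1)) (Ioi 0) := by
    simpa [mul_comm] using integrableOn_rpow_mul_exp_neg_mul_rpow (p := 1) (s := lam - 1)
      (by linarith) one_pos hx
  rw [scaledLowerGamma, intervalIntegral.integral_of_le ht]
  exact setIntegral_mono_set hint
    ((ae_restrict_iff' measurableSet_Ioi).2 (.of_forall fun s hs =>
      mul_nonneg (exp_nonneg _) (rpow_nonneg (le_of_lt hs) _)))
    Ioc_subset_Ioi_self.eventuallyLE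

theorem min_one_rpow_neg_eq_one {t : ℝ} (ht₀ : 0 < t) (ht₁ : t ≤ 1) (hlam : 0 < lam) :
    min 1 (t ^ (-lam)) = 1 :=
  min_eq_left (one_le_rpow_of_pos_of_le_one_of_nonpos ht₀ ht₁ (by linarith))

theorem min_one_rpow_neg_eq_rpow_neg {t : ℝ} (ht : 1 ≤ t) (hlam : 0 < lam) :
    min 1 (t ^ (-lam)) = t ^ (-lam) :=
  min_eq_right (rpow_le_one_of_one_le_of_nonpos ht (by linarith))

theorem rpow_neg_mul_scaledLowerGamma_le (hlam : 0 < lam) (hx : 0 < x) {t : ℝ} (ht : 0 < t) :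
    t ^ (-lam) * scaledLowerGamma x lam t ≤
      max (1 / lam) (∫ s in Ioi 0, exp (-x * s) * s ^ (lam - 1)) * min 1 (t ^ (-lam)) := by
  have hpos := rpow_pos_of_pos ht (-lam)
  rcases le_total t 1 with ht₁ | ht₁
  · rw [min_one_rpow_neg_eq_one ht ht₁ hlam, mul_one]
    calc t ^ (-lam) * scaledLowerGamma x lam t ≤ t ^ (-lam) * (t ^ lam / lam) :=
          mul_le_mul_of_nonneg_left (scaledLowerGamma_le hlam hx.le ht.le) hpos.le
      _ = 1 / lam := by rw [rpow_neg ht.le]; field_simp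
      _ ≤ _ := le_max_left _ _
  · rw [min_one_rpow_neg_eq_rpow_neg ht₁ hlam, mul_comm]
    exact mul_le_mul_of_nonneg_right
      ((scaledLowerGamma_le_integral_Ioi hlam hx ht.le).trans (le_max_right _ _)) hpos.le

theorem le_rpow_neg_mul_scaledLowerGamma (hlam : 0 < lam) (hx : 0 ≤ x) {t : ℝ} (ht : 0 < t) :
    exp (-x) / lam * min 1 (t ^ (-lam)) ≤ t ^ (-lam) * scaledLowerGamma x lam t := by
  have hpos := rpow_pos_of_pos ht (-lam)
  rcases le_total t 1 with ht₁ | ht₁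
  · rw [min_one_rpow_neg_eq_one ht ht₁ hlam, mul_one]
    calc exp (-x) / lam = t ^ (-lam) * (exp (-x) * (t ^ lam / lam)) := by
          rw [rpow_neg ht.le]; field_simp
      _ ≤ _ := mul_le_mul_of_nonneg_left (le_scaledLowerGamma hlam hx ht.le ht₁) hpos.le
  · rw [min_one_rpow_neg_eq_rpow_neg ht₁ hlam, mul_comm]
    refine mul_le_mul_of_nonneg_left ?_ hpos.le
    calc exp (-x) / lam = exp (-x) * (1 ^ lam / lam) := by rw [Real.one_rpow, mul_one_div]
      _ ≤ scaledLowerGamma x lam 1 := le_scaledLowerGamma hlam hx zero_le_one le_rfl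
      _ ≤ scaledLowerGamma x lam t := scaledLowerGamma_mono hlam zero_le_one ht₁

end

theorem setLIntegral_Ioi_min_one_rpow_neg {lam : ℝ} (hlam : 0 < lam) (μ : Measure ℝ) :
    ∫⁻ t in Ioi 0, ENNReal.ofReal (min 1 (t ^ (-lam))) ∂μ =
      μ (Ioc 0 1) + ∫⁻ t in Ioi 1, ENNReal.ofReal (t ^ (-lam)) ∂μ := by
  rw [← Ioc_union_Ioi_eq_Ioi zero_le_one, lintegral_union measurableSet_Ioi Ioc_disjoint_Ioi_same,
    ← setLIntegral_one]
  congr 1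
  · exact setLIntegral_congr_fun measurableSet_Ioc fun t ht => by
      rw [min_one_rpow_neg_eq_one ht.1 ht.2 hlam, ENNReal.ofReal_one]
  · exact setLIntegral_congr_fun measurableSet_Ioi fun t ht => by
      rw [min_one_rpow_neg_eq_rpow_neg (le_of_lt ht) hlam]

theorem setLIntegral_exp_mul_rpow_mul_tail_lt_top_iff {lam x : ℝ} (hlam : 0 < lam) (hx : 0 < x)
    (μ : Measure ℝ) :
    ∫⁻ s in Ioi 0, ENNReal.ofReal (exp (-x * s) * s ^ (lam - 1)) *
        (∫⁻ t in Ioi s, ENNReal.ofReal (t ^ (-lam)) ∂μ) < ⊤ ↔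
      μ (Ioc 0 1) < ⊤ ∧ ∫⁻ t in Ioi 1, ENNReal.ofReal (t ^ (-lam)) ∂μ < ⊤ := by
  rw [setLIntegral_Ioi_mul_tail_eq (fun t _ => intervalIntegrable_exp_mul_rpow hlam 0 t)
      (fun s hs => by positivity) (by fun_prop) (fun _ => ofReal_lt_top) μ,
    ← ENNReal.add_lt_top, ← setLIntegral_Ioi_min_one_rpow_neg hlam μ]
  set C := max (1 / lam) (∫ s in Ioi 0, exp (-x * s) * s ^ (lam - 1))
  have hC : 0 ≤ C := le_max_of_le_left (by positivity)
  refine lintegral_lt_top_iff_of_le_mul_of_mul_le (c := .ofReal (exp (-x) / lam)) (C := .ofReal C)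
    (ENNReal.ofReal_pos.2 (by positivity)).ne' ofReal_ne_top
    ((ae_restrict_iff' measurableSet_Ioi).2 (.of_forall fun t ht => ?_))
    ((ae_restrict_iff' measurableSet_Ioi).2 (.of_forall fun t ht => ?_))
  · rw [← ofReal_mul (rpow_nonneg (le_of_lt ht) _), ← ofReal_mul hC]
    exact ofReal_le_ofReal (rpow_neg_mul_scaledLowerGamma_le hlam hx ht)
  · rw [← ofReal_mul (rpow_nonneg (le_of_lt ht) _), ← ofReal_mul (by positivity)]
    exact ofReal_le_ofReal (le_rpow_neg_mul_scaledLowerGamma hlam hx.le ht)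

theorem integrability_remark (lam : ℝ) (hlam : 0 < lam) (μ : Measure ℝ) :
    ((∃ x : ℝ, 0 < x ∧
        ∫⁻ s in Set.Ioi (0 : ℝ),
          ENNReal.ofReal (Real.exp (-x * s) * s ^ (lam - 1)) *
            (∫⁻ t in Set.Ioi s, ENNReal.ofReal (t ^ (-lam)) ∂μ) < ⊤)
      ↔ (μ (Set.Ioc 0 1) < ⊤ ∧ ∫⁻ t in Set.Ioi (1 : ℝ), ENNReal.ofReal (t ^ (-lam)) ∂μ < ⊤))
    ∧
    ((∀ x : ℝ, 0 < x →
        ∫⁻ s in Set.Ioi (0 : ℝ),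
          ENNReal.ofReal (Real.exp (-x * s) * s ^ (lam - 1)) *
            (∫⁻ t in Set.Ioi s, ENNReal.ofReal (t ^ (-lam)) ∂μ) < ⊤)
      ↔ (μ (Set.Ioc 0 1) < ⊤ ∧ ∫⁻ t in Set.Ioi (1 : ℝ), ENNReal.ofReal (t ^ (-lam)) ∂μ < ⊤)) := by
  have key x (hx : 0 < x) := setLIntegral_exp_mul_rpow_mul_tail_lt_top_iff hlam hx μ
  exact ⟨⟨fun ⟨x, hx, h⟩ => (key x hx).1 h, fun h => ⟨1, one_pos, (key 1 one_pos).2 h⟩⟩,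
    ⟨fun h => (key 1 one_pos).1 (h 1 one_pos), fun h x hx => (key x hx).2 h⟩⟩
end

section
/- Let λ > 0 and k ≥ 2, and suppose f ∈ C^∞((0,∞)) satisfies c^λ_j(f)(x) ≥ 0 for all x > 0 and j = 0,…,k. Then lim_{x→0+} (x^{λ-1+k} f(x))^{(j)} = 0 for j = 0,…,k-2, and lim_{x→0+} (x^{λ-1+k} f(x))^{(k-1)} exists and lies in [0,∞). -/
open Real Set Filter Topology

lemma idW_eq {s : Set ℝ} (hs : IsOpen s) {x : ℝ} (hx : x ∈ s) (n : ℕ) (f : ℝ → ℝ) :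
    iteratedDerivWithin n f s x = iteratedDeriv n f x := by
  simp [iteratedDerivWithin_eq_iteratedFDerivWithin, iteratedDeriv_eq_iteratedFDeriv,
    iteratedFDerivWithin_of_isOpen n hs hx]

lemma dAt {h : ℝ → ℝ} (hh : ContDiffOn ℝ (⊤ : ℕ∞) h (Ioi 0)) (n : ℕ) {x : ℝ} (hx : 0 < x) :
    DifferentiableAt ℝ (iteratedDeriv n h) x := by
  have h1 : DifferentiableOn ℝ (iteratedDerivWithin n h (Ioi 0)) (Ioi 0) :=
    hh.differentiableOn_iteratedDerivWithin (by exact_mod_cast lt_top_iff_ne_top.2 (by simp))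
      (uniqueDiffOn_Ioi 0)
  have h2 : DifferentiableAt ℝ (iteratedDerivWithin n h (Ioi 0)) x :=
    (h1 x hx).differentiableAt (Ioi_mem_nhds hx)
  refine h2.congr_of_eventuallyEq ?_
  filter_upwards [Ioi_mem_nhds hx] with t ht
  exact (idW_eq isOpen_Ioi ht n h).symm

lemma prodRule {h : ℝ → ℝ} (hh : ContDiffOn ℝ (⊤ : ℕ∞) h (Ioi 0)) (n : ℕ) :
    ∀ x : ℝ, 0 < x → iteratedDeriv (n + 1) (fun t => t * h t) x
      = x * iteratedDeriv (n + 1) h x + (n + 1 : ℝ) * iteratedDeriv n h x := by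
  induction n with
  | zero =>
    intro x hx
    have hd : DifferentiableAt ℝ h x := by simpa using dAt hh 0 hx
    simp only [zero_add, iteratedDeriv_one, iteratedDeriv_zero]
    rw [deriv_fun_mul differentiableAt_fun_id hd]
    simp; ring
  | succ n ih =>
    intro x hx
    have e1 : iteratedDeriv (n + 1) (fun t => t * h t) =ᶠ[nhds x]
        fun t => t * iteratedDeriv (n + 1) h t + (n + 1 : ℝ) * iteratedDeriv n h t := by
      filter_upwards [Ioi_mem_nhds hx] with t ht
      exact ih t ht
    rw [iteratedDeriv_succ, e1.deriv_eq]
    have d1 : DifferentiableAt ℝ (fun t => t * iteratedDeriv (n + 1) h t) x :=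
      differentiableAt_fun_id.mul (dAt hh (n + 1) hx)
    have d2 : DifferentiableAt ℝ (fun t => (n + 1 : ℝ) * iteratedDeriv n h t) x :=
      (dAt hh n hx).const_mul _
    rw [deriv_fun_add d1 d2, deriv_fun_mul differentiableAt_fun_id (dAt hh (n + 1) hx),
      deriv_const_mul _ (dAt hh n hx)]
    rw [← iteratedDeriv_succ (n := n + 1), ← iteratedDeriv_succ (n := n)]
    push_cast
    simp; ring

lemma monoOn {φ : ℝ → ℝ} (hc : ∀ x ∈ Ioi (0:ℝ), DifferentiableAt ℝ φ x)
    (hd : ∀ x ∈ Ioi (0:ℝ), 0 ≤ deriv φ x) : MonotoneOn φ (Ioi 0) := by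
  refine monotoneOn_of_deriv_nonneg (convex_Ioi 0)
    (fun x hx => (hc x hx).continuousAt.continuousWithinAt) ?_ ?_
  · rw [interior_Ioi]; exact fun x hx => (hc x hx).differentiableWithinAt
  · rw [interior_Ioi]; exact hd

lemma mono_limit {φ ψ : ℝ → ℝ} (hmono : MonotoneOn φ (Ioi 0)) {c : ℝ}
    (hψ : Tendsto ψ (𝓝[>] (0:ℝ)) (𝓝 c)) (hle : ∀ x ∈ Ioi (0:ℝ), ψ x ≤ φ x) :
    ∃ l, c ≤ l ∧ Tendsto φ (𝓝[>] (0:ℝ)) (𝓝 l) := by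
  have hev : ∀ᶠ x in 𝓝[>] (0:ℝ), c - 1 < ψ x :=
    hψ.eventually (eventually_gt_nhds (by linarith))
  obtain ⟨δ, hδ, hsub⟩ := mem_nhdsGT_iff_exists_Ioo_subset.1 hev
  have hδ0 : (0:ℝ) < δ := hδ
  have hne : (Ioo (0:ℝ) δ).Nonempty := ⟨δ/2, by constructor <;> linarith⟩
  have hbdd : BddBelow (φ '' Ioo (0:ℝ) δ) := by
    refine ⟨c - 1, ?_⟩
    rintro y ⟨x, hx, rfl⟩
    exact le_trans (le_of_lt (hsub hx)) (hle x hx.1)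
  have ht := (hmono.mono Ioo_subset_Ioi_self).tendsto_nhdsWithin_Ioo_right hne hbdd
  refine ⟨_, ?_, ht⟩
  refine le_of_tendsto_of_tendsto hψ ht ?_
  filter_upwards [self_mem_nhdsWithin] with x hx
  exact hle x hx

lemma tendsto_id_Ioi : Tendsto (fun x : ℝ => x) (𝓝[>] (0:ℝ)) (𝓝 0) :=
  tendsto_id.mono_left nhdsWithin_le_nhds

lemma main_aux (lam : ℝ) (f : ℝ → ℝ) (hf : ContDiffOn ℝ (⊤ : ℕ∞) f (Ioi 0)) :
    ∀ k, 2 ≤ k →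
    (∀ j, j ≤ k → ∀ x : ℝ, 0 < x →
        0 ≤ iteratedDeriv j (fun t => t ^ (lam - 1 + (j : ℝ)) * f t) x) →
    (∀ j, j ≤ k - 2 → Tendsto (iteratedDeriv j (fun t => t ^ (lam - 1 + (k : ℝ)) * f t))
        (𝓝[>] (0:ℝ)) (𝓝 0))
    ∧ ∃ l, 0 ≤ l ∧ Tendsto (iteratedDeriv (k - 1) (fun t => t ^ (lam - 1 + (k : ℝ)) * f t))
        (𝓝[>] (0:ℝ)) (𝓝 l) := by
  have gsmooth : ∀ a : ℝ, ContDiffOn ℝ (⊤ : ℕ∞) (fun t => t ^ a * f t) (Ioi 0) := fun a =>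
    fun x hx => ((Real.contDiffAt_rpow_const_of_ne (ne_of_gt hx)).contDiffWithinAt).mul (hf x hx)
  have gstep : ∀ (j : ℕ), EqOn (fun t => t ^ (lam - 1 + ((j + 1 : ℕ) : ℝ)) * f t)
      (fun t => t * (t ^ (lam - 1 + (j : ℝ)) * f t)) (Ioi 0) := by
    intro j x hx
    have hx0 : (0:ℝ) < x := hx
    simp only
    rw [show (lam - 1 + ((j + 1 : ℕ) : ℝ)) = (lam - 1 + (j : ℝ)) + 1 by push_cast; ring,
      Real.rpow_add_one (ne_of_gt hx0)]
    ring
  refine Nat.le_induction ?_ ?_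
  · -- base case k = 2
    intro hu
    set g1 : ℝ → ℝ := fun t => t ^ (lam - 1 + ((1:ℕ) : ℝ)) * f t with hg1
    set G2 : ℝ → ℝ := fun t => t ^ (lam - 1 + ((2:ℕ) : ℝ)) * f t with hG2
    have hG2eq : EqOn G2 (fun t => t * g1 t) (Ioi 0) := gstep 1
    have hsm1 : ContDiffOn ℝ (⊤ : ℕ∞) g1 (Ioi 0) := by rw [hg1]; exact gsmooth _
    have hsmG2 : ContDiffOn ℝ (⊤ : ℕ∞) G2 (Ioi 0) := by rw [hG2]; exact gsmooth _
    have hg1nonneg : ∀ x : ℝ, 0 < x → 0 ≤ g1 x := by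
      intro x hx
      have h0 := hu 0 (by norm_num) x hx
      rw [iteratedDeriv_zero] at h0
      have heq : x ^ (lam - 1 + ((1:ℕ):ℝ)) = x * x ^ (lam - 1 + ((0:ℕ):ℝ)) := by
        rw [show (lam - 1 + ((1:ℕ):ℝ)) = (lam - 1 + ((0:ℕ):ℝ)) + 1 by push_cast; ring,
          Real.rpow_add_one (ne_of_gt hx)]
        ring
      show 0 ≤ x ^ (lam - 1 + ((1:ℕ):ℝ)) * f x
      rw [heq, mul_assoc]
      exact mul_nonneg hx.le h0
    have hg1deriv : ∀ x : ℝ, 0 < x → 0 ≤ deriv g1 x := by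
      intro x hx
      have := hu 1 (by norm_num) x hx
      rwa [iteratedDeriv_one] at this
    have hg1mono : MonotoneOn g1 (Ioi 0) := by
      refine monoOn (fun x hx => ?_) (fun x hx => hg1deriv x hx)
      simpa using dAt hsm1 0 hx
    obtain ⟨a, ha0, hga⟩ := mono_limit hg1mono (tendsto_const_nhds (x := (0:ℝ)))
      (fun x hx => hg1nonneg x hx)
    constructor
    · intro j hj
      interval_cases j
      rw [iteratedDeriv_zero]
      have : Tendsto (fun x : ℝ => x * g1 x) (𝓝[>] (0:ℝ)) (𝓝 0) := by
        have := tendsto_id_Ioi.mul hga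
        rwa [zero_mul] at this
      refine this.congr' ?_
      filter_upwards [self_mem_nhdsWithin] with x hx
      exact (hG2eq hx).symm
    · -- the k-1 = 1 part
      have hφeq : ∀ x : ℝ, 0 < x → iteratedDeriv 1 G2 x
          = x * iteratedDeriv 1 g1 x + (1:ℝ) * iteratedDeriv 0 g1 x := by
        intro x hx
        have := hG2eq.iteratedDeriv_of_isOpen isOpen_Ioi 1 (mem_Ioi.2 hx)
        rw [this]
        have := prodRule hsm1 0 x hx
        simpa using this
      have hle : ∀ x ∈ Ioi (0:ℝ), g1 x ≤ iteratedDeriv 1 G2 x := by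
        intro x hx
        have hx0 : (0:ℝ) < x := hx
        rw [hφeq x hx0, iteratedDeriv_zero, iteratedDeriv_one]
        nlinarith [hg1deriv x hx0]
      have hmono : MonotoneOn (iteratedDeriv 1 G2) (Ioi 0) := by
        refine monoOn (fun x hx => dAt hsmG2 1 hx) (fun x hx => ?_)
        have h2 := hu 2 (le_refl 2) x hx
        rwa [iteratedDeriv_succ (n := 1)] at h2
      obtain ⟨l, hal, hl⟩ := mono_limit hmono hga hle
      exact ⟨l, le_trans ha0 hal, by simpa using hl⟩
  · -- inductive step k → k + 1
    intro k hk IH hu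
    have huk : ∀ j, j ≤ k → ∀ x : ℝ, 0 < x →
        0 ≤ iteratedDeriv j (fun t => t ^ (lam - 1 + (j : ℝ)) * f t) x :=
      fun j hj => hu j (le_trans hj (Nat.le_succ k))
    obtain ⟨H0, l, hl0, Hl⟩ := IH huk
    set gk : ℝ → ℝ := fun t => t ^ (lam - 1 + ((k:ℕ) : ℝ)) * f t with hgk
    set gk1 : ℝ → ℝ := fun t => t ^ (lam - 1 + ((k + 1 : ℕ) : ℝ)) * f t with hgk1
    have hEqOn : EqOn gk1 (fun t => t * gk t) (Ioi 0) := gstep k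
    have hsmk : ContDiffOn ℝ (⊤ : ℕ∞) gk (Ioi 0) := by rw [hgk]; exact gsmooth _
    have hsmk1 : ContDiffOn ℝ (⊤ : ℕ∞) gk1 (Ioi 0) := by rw [hgk1]; exact gsmooth _
    have hEq : ∀ (j : ℕ) (x : ℝ), 0 < x →
        iteratedDeriv j gk1 x = iteratedDeriv j (fun t => t * gk t) x :=
      fun j x hx => hEqOn.iteratedDeriv_of_isOpen isOpen_Ioi j (mem_Ioi.2 hx)
    have hgk0 : Tendsto gk (𝓝[>] (0:ℝ)) (𝓝 0) := by
      have := H0 0 (Nat.zero_le _)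
      rwa [iteratedDeriv_zero] at this
    have hlim : ∀ j, j ≤ k - 1 → ∃ a, Tendsto (iteratedDeriv j gk) (𝓝[>] (0:ℝ)) (𝓝 a) := by
      intro j hj
      rcases Nat.lt_or_ge j (k - 1) with hlt | hge
      · exact ⟨0, H0 j (by omega)⟩
      · have : j = k - 1 := le_antisymm hj hge
        exact ⟨l, this ▸ Hl⟩
    constructor
    · intro j hj
      have hj' : j ≤ k - 1 := by omega
      match j, hj' with
      | 0, _ =>
        rw [iteratedDeriv_zero]
        have : Tendsto (fun x : ℝ => x * gk x) (𝓝[>] (0:ℝ)) (𝓝 0) := by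
          have := tendsto_id_Ioi.mul hgk0
          rwa [zero_mul] at this
        refine this.congr' ?_
        filter_upwards [self_mem_nhdsWithin] with x hx
        exact (hEqOn hx).symm
      | (m + 1), hj' =>
        obtain ⟨a, ha⟩ := hlim (m + 1) hj'
        have hm : Tendsto (iteratedDeriv m gk) (𝓝[>] (0:ℝ)) (𝓝 0) := H0 m (by omega)
        have ht : Tendsto (fun x : ℝ => x * iteratedDeriv (m + 1) gk x
            + (m + 1 : ℝ) * iteratedDeriv m gk x) (𝓝[>] (0:ℝ)) (𝓝 0) := by
          have h1 := tendsto_id_Ioi.mul ha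
          have h2 := hm.const_mul ((m : ℝ) + 1)
          have := h1.add h2
          simpa using this
        refine ht.congr' ?_
        filter_upwards [self_mem_nhdsWithin] with x hx
        rw [hEq (m + 1) x hx, prodRule hsmk m x hx]
    · -- index k part
      have hkcast : ((k - 1 : ℕ) : ℝ) + 1 = (k : ℝ) := by
        have : 1 ≤ k := by omega
        push_cast [Nat.cast_sub this]
        ring
      have hksub : (k - 1) + 1 = k := by omega
      have hφeq : ∀ x : ℝ, 0 < x → iteratedDeriv k gk1 x
          = x * iteratedDeriv k gk x + (k : ℝ) * iteratedDeriv (k - 1) gk x := by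
        intro x hx
        rw [hEq k x hx]
        have := prodRule hsmk (k - 1) x hx
        rw [hksub] at this
        rw [this, hkcast]
      have hψ : Tendsto (fun x => (k : ℝ) * iteratedDeriv (k - 1) gk x)
          (𝓝[>] (0:ℝ)) (𝓝 ((k : ℝ) * l)) := Hl.const_mul _
      have hle : ∀ x ∈ Ioi (0:ℝ),
          (k : ℝ) * iteratedDeriv (k - 1) gk x ≤ iteratedDeriv k gk1 x := by
        intro x hx
        have hx0 : (0:ℝ) < x := hx
        rw [hφeq x hx0]
        have hnn : 0 ≤ iteratedDeriv k gk x := huk k (le_refl k) x hx0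
        nlinarith
      have hmono : MonotoneOn (iteratedDeriv k gk1) (Ioi 0) := by
        refine monoOn (fun x hx => dAt hsmk1 k hx) (fun x hx => ?_)
        have h2 := hu (k + 1) (le_refl _) x hx
        rwa [iteratedDeriv_succ (n := k)] at h2
      obtain ⟨l', hal', hl'⟩ := mono_limit hmono hψ hle
      have h0l' : 0 ≤ l' := le_trans (mul_nonneg (by positivity) hl0) hal'
      exact ⟨l', h0l', by simpa [Nat.add_sub_cancel] using hl'⟩

theorem limits_at_zero_of_c_nonneg (lam : ℝ) (hlam : 0 < lam) (f : ℝ → ℝ)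
    (hf : ContDiffOn ℝ (⊤ : ℕ∞) f (Set.Ioi 0)) (k : ℕ) (hk : 2 ≤ k)
    (h : ∀ j, j ≤ k → ∀ x : ℝ, 0 < x →
      0 ≤ x ^ (1 - lam) *
          iteratedDerivWithin j (fun t => t ^ (lam - 1 + (j : ℝ)) * f t) (Set.Ioi 0) x) :
    (∀ j, j ≤ k - 2 →
      Filter.Tendsto
        (fun x => iteratedDerivWithin j (fun t => t ^ (lam - 1 + (k : ℝ)) * f t) (Set.Ioi 0) x)
        (nhdsWithin 0 (Set.Ioi 0)) (nhds 0))
    ∧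
    ∃ l : ℝ, 0 ≤ l ∧
      Filter.Tendsto
        (fun x =>
          iteratedDerivWithin (k - 1) (fun t => t ^ (lam - 1 + (k : ℝ)) * f t) (Set.Ioi 0) x)
        (nhdsWithin 0 (Set.Ioi 0)) (nhds l) := by
  have hu : ∀ j, j ≤ k → ∀ x : ℝ, 0 < x →
      0 ≤ iteratedDeriv j (fun t => t ^ (lam - 1 + (j : ℝ)) * f t) x := by
    intro j hj x hx
    have h1 := h j hj x hx
    have hpos : (0:ℝ) < x ^ (1 - lam) := Real.rpow_pos_of_pos hx _
    have := (mul_nonneg_iff_of_pos_left hpos).1 h1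
    rwa [idW_eq isOpen_Ioi (mem_Ioi.2 hx)] at this
  obtain ⟨H0, l, hl0, Hl⟩ := main_aux lam f hf k hk hu
  constructor
  · intro j hj
    refine (H0 j hj).congr' ?_
    filter_upwards [self_mem_nhdsWithin] with x hx
    exact (idW_eq isOpen_Ioi hx j _).symm
  · refine ⟨l, hl0, Hl.congr' ?_⟩
    filter_upwards [self_mem_nhdsWithin] with x hx
    exact (idW_eq isOpen_Ioi hx (k - 1) _).symm
end

section
/- Let 0 < λ₁ < λ₂ and let μ be a positive measure on (0,∞) with smooth density (or more generally a distribution) such that (-1)^j s^j ∂^j μ is a positive measure for all j = 0,…,N. Then for every k ≤ N, (-1)^k s^k ∂^k (s^{λ₁-λ₂} μ) = s^{λ₁-λ₂} Σ_{j=0}^{k} C(k,j) (Γ(k-j+λ₂-λ₁)/Γ(λ₂-λ₁)) (-1)^j s^j ∂^j μ, and in particular this is a positive measure. -/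
open Real Set Finset

private lemma hasDerivAt_iterDW {m : ℝ → ℝ} (hm : ContDiffOn ℝ (⊤ : ℕ∞) m (Set.Ioi 0)) (p : ℕ)
    {x : ℝ} (hx : 0 < x) :
    HasDerivAt (iteratedDerivWithin p m (Set.Ioi 0))
      (iteratedDerivWithin (p + 1) m (Set.Ioi 0) x) x := by
  have hx' : x ∈ Set.Ioi (0:ℝ) := hx
  have hd : DifferentiableWithinAt ℝ (iteratedDerivWithin p m (Set.Ioi 0)) (Set.Ioi 0) x :=
    hm.differentiableOn_iteratedDerivWithin (by exact_mod_cast ENat.coe_lt_top p)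
      (uniqueDiffOn_Ioi 0) x hx'
  have hD : DifferentiableAt ℝ (iteratedDerivWithin p m (Set.Ioi 0)) x :=
    hd.differentiableAt (isOpen_Ioi.mem_nhds hx')
  have h := hD.hasDerivAt
  rwa [← derivWithin_of_isOpen isOpen_Ioi hx',
    ← iteratedDerivWithin_succ] at h

private lemma key (α : ℝ) {m : ℝ → ℝ} (hm : ContDiffOn ℝ (⊤ : ℕ∞) m (Set.Ioi 0)) :
    ∀ n : ℕ, ∀ x : ℝ, 0 < x →
      iteratedDerivWithin n (fun t => t ^ α * m t) (Set.Ioi 0) x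
      = ∑ q ∈ Finset.range (n + 1), (n.choose q : ℝ) * (∏ i ∈ Finset.range q, (α - i)) *
          x ^ (α - q) * iteratedDerivWithin (n - q) m (Set.Ioi 0) x := by
  intro n
  induction n with
  | zero =>
    intro x hx
    simp [iteratedDerivWithin_zero]
  | succ n ih =>
    intro x hx
    have hx' : x ∈ Set.Ioi (0:ℝ) := hx
    rw [iteratedDerivWithin_succ, derivWithin_of_isOpen isOpen_Ioi hx']
    have hev : iteratedDerivWithin n (fun t => t ^ α * m t) (Set.Ioi 0)
        =ᶠ[nhds x] (fun y => ∑ q ∈ Finset.range (n + 1),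
          (n.choose q : ℝ) * (∏ i ∈ Finset.range q, (α - i)) *
            y ^ (α - q) * iteratedDerivWithin (n - q) m (Set.Ioi 0) y) :=
      Filter.eventuallyEq_of_mem (isOpen_Ioi.mem_nhds hx') (fun y hy => ih y hy)
    rw [hev.deriv_eq]
    have hterm : ∀ q ∈ Finset.range (n + 1),
        HasDerivAt (fun y => (n.choose q : ℝ) * (∏ i ∈ Finset.range q, (α - i)) *
            y ^ (α - q) * iteratedDerivWithin (n - q) m (Set.Ioi 0) y)
          (((n.choose q : ℝ) * (∏ i ∈ Finset.range q, (α - i)) * ((α - q) * x ^ (α - q - 1))) *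
              iteratedDerivWithin (n - q) m (Set.Ioi 0) x
            + ((n.choose q : ℝ) * (∏ i ∈ Finset.range q, (α - i)) * x ^ (α - q)) *
              iteratedDerivWithin (n - q + 1) m (Set.Ioi 0) x) x := by
      intro q _
      have h1 : HasDerivAt (fun y : ℝ => y ^ (α - q)) ((α - q) * x ^ (α - q - 1)) x :=
        Real.hasDerivAt_rpow_const (Or.inl hx.ne')
      exact (h1.const_mul ((n.choose q : ℝ) * (∏ i ∈ Finset.range q, (α - i)))).mul
        (hasDerivAt_iterDW hm (n - q) hx)
    have hsum := HasDerivAt.fun_sum hterm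
    rw [hsum.deriv]
    -- now purely algebraic / combinatorial
    rw [Finset.sum_add_distrib, Finset.sum_range_succ' _ (n + 1)]
    have e0 : ((n+1).choose 0 : ℝ) * (∏ i ∈ Finset.range 0, (α - i)) * x ^ (α - (0:ℕ)) *
        iteratedDerivWithin (n + 1 - 0) m (Set.Ioi 0) x
        = ((n.choose 0 : ℝ) * (∏ i ∈ Finset.range 0, (α - i)) * x ^ (α - (0:ℕ))) *
          iteratedDerivWithin (n - 0 + 1) m (Set.Ioi 0) x := by
      simp
    rw [e0]
    have esplit : ∀ q ∈ Finset.range (n + 1),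
        ((n+1).choose (q+1) : ℝ) * (∏ i ∈ Finset.range (q+1), (α - i)) * x ^ (α - (q+1:ℕ)) *
          iteratedDerivWithin (n + 1 - (q+1)) m (Set.Ioi 0) x
        = ((n.choose q : ℝ) * (∏ i ∈ Finset.range q, (α - i)) * ((α - q) * x ^ (α - q - 1))) *
            iteratedDerivWithin (n - q) m (Set.Ioi 0) x
          + ((n.choose (q+1) : ℝ) * (∏ i ∈ Finset.range (q+1), (α - i)) * x ^ (α - (q+1:ℕ))) *
            iteratedDerivWithin (n - q) m (Set.Ioi 0) x := by
      intro q hq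
      have h1 : n + 1 - (q + 1) = n - q := by omega
      have h2 : ((n+1).choose (q+1) : ℝ) = (n.choose q : ℝ) + (n.choose (q+1) : ℝ) := by
        rw [Nat.choose_succ_succ]; push_cast; ring
      have h3 : (α - (q+1:ℕ)) = α - q - 1 := by push_cast; ring
      rw [h1, h2, h3, Finset.prod_range_succ]
      ring
    rw [Finset.sum_congr rfl esplit, Finset.sum_add_distrib]
    have hFB : (∑ q ∈ Finset.range (n+1),
          ((n.choose q : ℝ) * (∏ i ∈ Finset.range q, (α - i)) * x ^ (α - (q:ℕ))) *
            iteratedDerivWithin (n - q + 1) m (Set.Ioi 0) x)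
        = (∑ q ∈ Finset.range (n+1),
            ((n.choose (q+1) : ℝ) * (∏ i ∈ Finset.range (q+1), (α - i)) * x ^ (α - (q+1:ℕ))) *
              iteratedDerivWithin (n - q) m (Set.Ioi 0) x)
          + ((n.choose 0 : ℝ) * (∏ i ∈ Finset.range 0, (α - i)) * x ^ (α - (0:ℕ))) *
              iteratedDerivWithin (n - 0 + 1) m (Set.Ioi 0) x := by
      rw [Finset.sum_range_succ' (fun q => ((n.choose q : ℝ) *
        (∏ i ∈ Finset.range q, (α - i)) * x ^ (α - (q:ℕ))) *
        iteratedDerivWithin (n - q + 1) m (Set.Ioi 0) x) n]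
      congr 1
      rw [Finset.sum_range_succ]
      have hz : ((n.choose (n+1) : ℝ) * (∏ i ∈ Finset.range (n+1), (α - i)) *
          x ^ (α - (n+1:ℕ))) * iteratedDerivWithin (n - n) m (Set.Ioi 0) x = 0 := by
        simp [Nat.choose_succ_self]
      rw [hz, add_zero]
      refine (Finset.sum_congr rfl ?_)
      intro q hq
      have hq' : q < n := Finset.mem_range.mp hq
      have h4 : n - (q + 1) + 1 = n - q := by omega
      rw [h4]
    rw [hFB]
    ring

private lemma gamma_prod {a : ℝ} (ha : 0 < a) (q : ℕ) :
    Real.Gamma (a + q) = (∏ i ∈ Finset.range q, (a + i)) * Real.Gamma a := by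
  induction q with
  | zero => simp
  | succ q ih =>
    have h : a + ((q+1 : ℕ) : ℝ) = (a + q) + 1 := by push_cast; ring
    rw [h, Real.Gamma_add_one (by positivity), ih, Finset.prod_range_succ]
    ring

theorem class_monotone_in_lambda (lam1 lam2 : ℝ) (h1 : 0 < lam1) (h12 : lam1 < lam2)
    (N : ℕ) (m : ℝ → ℝ) (hm : ContDiffOn ℝ (⊤ : ℕ∞) m (Set.Ioi 0))
    (hmpos : ∀ s : ℝ, 0 < s → 0 < m s)
    (hmono : ∀ j, j ≤ N → ∀ s : ℝ, 0 < s →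
      0 ≤ (-1 : ℝ) ^ j * s ^ j * iteratedDerivWithin j m (Set.Ioi 0) s) :
    ∀ k, k ≤ N → ∀ s : ℝ, 0 < s →
      ((-1 : ℝ) ^ k * s ^ k *
          iteratedDerivWithin k (fun t => t ^ (lam1 - lam2) * m t) (Set.Ioi 0) s
        = s ^ (lam1 - lam2) *
            ∑ j ∈ Finset.range (k + 1),
              (k.choose j : ℝ) *
                (Real.Gamma ((k : ℝ) - j + lam2 - lam1) / Real.Gamma (lam2 - lam1)) *
                ((-1 : ℝ) ^ j * s ^ j * iteratedDerivWithin j m (Set.Ioi 0) s))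
      ∧
      0 ≤ (-1 : ℝ) ^ k * s ^ k *
            iteratedDerivWithin k (fun t => t ^ (lam1 - lam2) * m t) (Set.Ioi 0) s := by
  have ha : (0:ℝ) < lam2 - lam1 := by linarith
  have hΓ : (0:ℝ) < Real.Gamma (lam2 - lam1) := Real.Gamma_pos_of_pos ha
  intro k hk s hs
  have heq : (-1 : ℝ) ^ k * s ^ k *
      iteratedDerivWithin k (fun t => t ^ (lam1 - lam2) * m t) (Set.Ioi 0) s
      = s ^ (lam1 - lam2) *
          ∑ j ∈ Finset.range (k + 1),
            (k.choose j : ℝ) *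
              (Real.Gamma ((k : ℝ) - j + lam2 - lam1) / Real.Gamma (lam2 - lam1)) *
              ((-1 : ℝ) ^ j * s ^ j * iteratedDerivWithin j m (Set.Ioi 0) s) := by
    rw [key (lam1 - lam2) hm k s hs]
    rw [← Finset.sum_range_reflect (fun j => (k.choose j : ℝ) *
        (Real.Gamma ((k : ℝ) - j + lam2 - lam1) / Real.Gamma (lam2 - lam1)) *
        ((-1 : ℝ) ^ j * s ^ j * iteratedDerivWithin j m (Set.Ioi 0) s)) (k+1)]
    rw [Finset.mul_sum, Finset.mul_sum]
    apply Finset.sum_congr rfl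
    intro q hq
    have hq' : q ≤ k := by
      have := Finset.mem_range.mp hq; omega
    have hidx : k + 1 - 1 - q = k - q := by omega
    rw [hidx]
    have hch : (k.choose (k - q) : ℝ) = (k.choose q : ℝ) := by
      rw [Nat.choose_symm hq']
    have hcast : ((k - q : ℕ) : ℝ) = (k : ℝ) - q := by
      push_cast [Nat.cast_sub hq']; ring
    have hΓarg : (k : ℝ) - ((k - q : ℕ) : ℝ) + lam2 - lam1 = (lam2 - lam1) + q := by
      rw [hcast]; ring
    have hP : (∏ i ∈ Finset.range q, ((lam1 - lam2) - i))
        = (-1 : ℝ) ^ q * ∏ i ∈ Finset.range q, ((lam2 - lam1) + i) := by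
      have h : ∀ i ∈ Finset.range q, (lam1 - lam2) - (i:ℝ)
          = (-1) * ((lam2 - lam1) + i) := by
        intro i _; ring
      rw [Finset.prod_congr rfl h, Finset.prod_mul_distrib, Finset.prod_const,
        Finset.card_range]
    have hΓq : Real.Gamma ((lam2 - lam1) + q)
        = (∏ i ∈ Finset.range q, ((lam2 - lam1) + i)) * Real.Gamma (lam2 - lam1) :=
      gamma_prod ha q
    have hrp : s ^ ((lam1 - lam2) - (q:ℝ)) = s ^ (lam1 - lam2) * (s ^ q)⁻¹ := by
      rw [Real.rpow_sub hs, Real.rpow_natCast, div_eq_mul_inv]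
    have hspow : (s : ℝ) ^ (k - q) = s ^ k * (s ^ q)⁻¹ := pow_sub₀ s hs.ne' hq'
    have hneg : (-1 : ℝ) ^ (k - q) = (-1) ^ k * ((-1:ℝ) ^ q)⁻¹ :=
      pow_sub₀ (-1 : ℝ) (by norm_num) hq'
    rw [hch, hΓarg, hΓq, hP, hrp, hspow, hneg]
    have hsq : (s : ℝ) ^ q ≠ 0 := pow_ne_zero _ hs.ne'
    have hnq : ((-1 : ℝ)) ^ q ≠ 0 := pow_ne_zero _ (by norm_num)
    field_simp
    ring_nf
    rw [mul_comm q 2, pow_mul]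
    norm_num
  refine ⟨heq, ?_⟩
  rw [heq]
  apply mul_nonneg (Real.rpow_pos_of_pos hs _).le
  apply Finset.sum_nonneg
  intro j hj
  have hj' : j ≤ k := by have := Finset.mem_range.mp hj; omega
  apply mul_nonneg
  · apply mul_nonneg (Nat.cast_nonneg _)
    apply div_nonneg _ hΓ.le
    apply (Real.Gamma_pos_of_pos _).le
    have : (j:ℝ) ≤ (k:ℝ) := by exact_mod_cast hj'
    linarith
  · exact hmono j (le_trans hj' hk) s hs
end

section
/- Let λ > 0 and suppose a smooth positive function m on (0,∞) satisfies (-1)^j s^j m^{(j)}(s) ≥ 0 for j = 0,…,k, and let f(x) = ∫₀^∞ e^{-xs} s^{λ-1} m(s) ds (assumed finite for all x > 0, with all relevant integrals finite). Then for each j = 0,…,k, the function x^{1-λ}(x^{λ-1+j} f(x))^{(j)} equals ∫₀^∞ e^{-xs} s^{λ-1} (-1)^j s^j m^{(j)}(s) ds and is completely monotonic. -/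
open Real Set MeasureTheory

section Aux

open Filter Topology

namespace CkCmAux

lemma pow_mul_exp_le (n : ℕ) {x s : ℝ} (hx : 0 < x) (hs : 0 ≤ s) :
    s ^ n * Real.exp (-x * s) ≤ n.factorial * (2 / x) ^ n * Real.exp (-(x / 2) * s) := by
  have hfac : (0:ℝ) < n.factorial := by positivity
  have h2 : (x / 2 * s) ^ n ≤ n.factorial * Real.exp (x / 2 * s) := by
    have h := Real.pow_div_factorial_le_exp (x := x / 2 * s) (by positivity) n
    rw [div_le_iff₀ hfac] at h
    linarith [h]
  have hsn : s ^ n = (2 / x) ^ n * (x / 2 * s) ^ n := by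
    rw [← mul_pow]
    congr 1
    field_simp
  calc s ^ n * Real.exp (-x * s)
      = (2 / x) ^ n * (x / 2 * s) ^ n * Real.exp (-x * s) := by rw [← hsn]
    _ ≤ (2 / x) ^ n * (n.factorial * Real.exp (x / 2 * s)) * Real.exp (-x * s) := by
        have := Real.exp_nonneg (-x*s)
        gcongr
    _ = n.factorial * (2 / x) ^ n * (Real.exp (x / 2 * s) * Real.exp (-x * s)) := by ring
    _ = n.factorial * (2 / x) ^ n * Real.exp (-(x / 2) * s) := by
        rw [← Real.exp_add]
        ring_nf

end CkCmAux

namespace CkCmAux2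
open CkCmAux

noncomputable def LInt (G : ℝ → ℝ) (x : ℝ) : ℝ := ∫ s in Ioi (0:ℝ), Real.exp (-x * s) * G s

def LHyp (G : ℝ → ℝ) : Prop :=
  AEStronglyMeasurable G (volume.restrict (Ioi 0)) ∧
    ∀ x : ℝ, 0 < x → IntegrableOn (fun s => Real.exp (-x * s) * |G s|) (Ioi 0)

variable {G : ℝ → ℝ}

lemma aesm_exp (x : ℝ) :
    AEStronglyMeasurable (fun s : ℝ => Real.exp (-x * s)) (volume.restrict (Ioi 0)) :=
  (Real.continuous_exp.comp (by continuity)).aestronglyMeasurable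

lemma LHyp.abs (hG : LHyp G) :
    AEStronglyMeasurable (fun s : ℝ => |G s|) (volume.restrict (Ioi 0)) :=
  hG.1.norm.congr (Filter.Eventually.of_forall fun s => (Real.norm_eq_abs _))

lemma LHyp.integrableOn_pow (hG : LHyp G) (n : ℕ) {x : ℝ} (hx : 0 < x) :
    IntegrableOn (fun s => s ^ n * (Real.exp (-x * s) * |G s|)) (Ioi 0) := by
  have h2 := (hG.2 (x/2) (by positivity)).const_mul ((n.factorial : ℝ) * (2/x)^n)
  refine Integrable.mono' h2 ?_ ?_
  · exact (continuous_pow n).aestronglyMeasurable.mul ((aesm_exp x).mul hG.abs)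
  · filter_upwards [ae_restrict_mem measurableSet_Ioi] with s hs
    have hs0 : (0:ℝ) ≤ s := le_of_lt hs
    rw [Real.norm_eq_abs, abs_of_nonneg (by positivity)]
    calc s ^ n * (Real.exp (-x*s) * |G s|) = (s^n * Real.exp (-x*s)) * |G s| := by ring
      _ ≤ ((n.factorial : ℝ) * (2/x)^n * Real.exp (-(x/2)*s)) * |G s| := by
          exact mul_le_mul_of_nonneg_right (pow_mul_exp_le n hx hs0) (abs_nonneg _)
      _ = (n.factorial : ℝ) * (2/x)^n * (Real.exp (-(x/2)*s) * |G s|) := by ring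

lemma LHyp.integrable (hG : LHyp G) {x : ℝ} (hx : 0 < x) :
    IntegrableOn (fun s => Real.exp (-x * s) * G s) (Ioi 0) := by
  refine Integrable.mono' (hG.2 x hx) ?_ ?_
  · exact (aesm_exp x).mul hG.1
  · filter_upwards with s
    rw [Real.norm_eq_abs, abs_mul, abs_of_nonneg (Real.exp_nonneg _)]

lemma hasDerivAt_LInt (hG : LHyp G) {x : ℝ} (hx : 0 < x) :
    HasDerivAt (LInt G) (∫ s in Ioi (0:ℝ), -(s * (Real.exp (-x * s) * G s))) x := by
  have key := hasDerivAt_integral_of_dominated_loc_of_deriv_le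
    (μ := volume.restrict (Ioi (0:ℝ)))
    (F := fun y s => Real.exp (-y * s) * G s)
    (F' := fun y s => -(s * (Real.exp (-y * s) * G s)))
    (x₀ := x) (bound := fun s => s * (Real.exp (-(x/2) * s) * |G s|))
    (Metric.ball_mem_nhds x (half_pos hx))
    (Filter.Eventually.of_forall fun y => (aesm_exp y).mul hG.1)
    (hG.integrable hx)
    ?_ ?_ ?_ ?_
  · exact key.2
  · -- measurability of F' x
    show AEStronglyMeasurable (fun s => -(s * (Real.exp (-x * s) * G s))) _
    have : (fun s => -(s * (Real.exp (-x * s) * G s)))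
        = fun s => (-(s * Real.exp (-x * s))) * G s := by funext s; ring
    rw [this]
    exact (Continuous.aestronglyMeasurable (by continuity)).mul hG.1
  · -- bound
    filter_upwards [ae_restrict_mem measurableSet_Ioi] with s hs
    intro y hy
    have hs0 : (0:ℝ) < s := hs
    have hy2 : x/2 ≤ y := by
      have := abs_lt.1 (mem_ball_iff_norm.1 hy)
      linarith [this.1]
    rw [Real.norm_eq_abs]
    calc |(-(s * (Real.exp (-y * s) * G s)))| = s * (Real.exp (-y*s) * |G s|) := by
          rw [abs_neg, abs_mul, abs_mul, abs_of_nonneg hs0.le,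
            abs_of_nonneg (Real.exp_nonneg _)]
      _ ≤ s * (Real.exp (-(x/2)*s) * |G s|) := by
          gcongr
  · -- integrability of bound
    have := hG.integrableOn_pow 1 (half_pos hx)
    simpa [pow_one, IntegrableOn] using this
  · -- differentiability in parameter
    filter_upwards with s
    intro y hy
    have h1 : HasDerivAt (fun y : ℝ => -y * s) (-s) y := by
      simpa using ((hasDerivAt_id y).neg.mul_const s)
    have h2 := (h1.exp).mul_const (G s)
    refine h2.congr_deriv ?_
    ring

lemma LHyp.pow_mul (hG : LHyp G) (n : ℕ) : LHyp (fun s => (-1)^n * s^n * G s) := by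
  constructor
  · exact (Continuous.aestronglyMeasurable (by continuity)).mul hG.1
  · intro x hx
    refine (hG.integrableOn_pow n hx).congr_fun ?_ measurableSet_Ioi
    intro s hs
    have hs0 : (0:ℝ) < s := hs
    show s ^ n * (Real.exp (-x*s) * |G s|) = Real.exp (-x*s) * |(-1:ℝ)^n * s^n * G s|
    rw [abs_mul, abs_mul, abs_pow, abs_pow, abs_neg, abs_one, one_pow, one_mul,
      abs_of_nonneg hs0.le]
    ring

lemma iteratedDerivWithin_LInt (n : ℕ) :
    ∀ (G : ℝ → ℝ), LHyp G → ∀ x ∈ Ioi (0:ℝ),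
      iteratedDerivWithin n (LInt G) (Ioi 0) x
        = LInt (fun s => (-1)^n * s^n * G s) x := by
  induction n with
  | zero =>
    intro G hG x hx
    simp [LInt]
  | succ n IH =>
    intro G hG x hx
    have hx' : (0:ℝ) < x := hx
    rw [iteratedDerivWithin_succ]
    rw [derivWithin_congr (fun y hy => IH G hG y hy) (IH G hG x hx)]
    rw [derivWithin_of_isOpen isOpen_Ioi hx]
    rw [(hasDerivAt_LInt (hG.pow_mul n) hx').deriv]
    rw [LInt]
    refine setIntegral_congr_fun measurableSet_Ioi fun s hs => ?_
    ring

lemma contDiffOn_LInt (hG : LHyp G) : ContDiffOn ℝ (⊤ : ℕ∞) (LInt G) (Ioi 0) := by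
  set U : Set ℂ := {z | 0 < z.re} with hU
  have hUopen : IsOpen U := isOpen_lt continuous_const Complex.continuous_re
  set FC : ℂ → ℂ := fun z => ∫ s in Ioi (0:ℝ), Complex.exp (-z * s) * (G s : ℂ) with hFCdef
  have hmeasC : ∀ z : ℂ, AEStronglyMeasurable (fun s : ℝ => Complex.exp (-z * s) * (G s : ℂ))
      (volume.restrict (Ioi 0)) := by
    intro z
    exact (Continuous.aestronglyMeasurable (by continuity)).mul
      (Complex.continuous_ofReal.comp_aestronglyMeasurable hG.1)
  have hnorm : ∀ (z : ℂ) (s : ℝ), 0 < s →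
      ‖Complex.exp (-z * s) * (G s : ℂ)‖ = Real.exp (-z.re * s) * |G s| := by
    intro z s _
    rw [norm_mul, Complex.norm_exp]
    congr 1
    · congr 1
      simp [Complex.mul_re]
    · simp
  have hdiff : DifferentiableOn ℂ FC U := by
    intro z₀ hz₀
    have hz₀re : 0 < z₀.re := hz₀
    have key := hasDerivAt_integral_of_dominated_loc_of_deriv_le
      (μ := volume.restrict (Ioi (0:ℝ)))
      (F := fun (z : ℂ) (s : ℝ) => Complex.exp (-z * s) * (G s : ℂ))
      (F' := fun (z : ℂ) (s : ℝ) => (-(s:ℂ)) * (Complex.exp (-z * s) * (G s : ℂ)))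
      (x₀ := z₀) (bound := fun s : ℝ => s * (Real.exp (-(z₀.re/2) * s) * |G s|))
      (Metric.ball_mem_nhds z₀ (half_pos hz₀re))
      (Filter.Eventually.of_forall fun z => hmeasC z)
      ?_ ((Continuous.aestronglyMeasurable (by continuity : Continuous fun s : ℝ => -(s:ℂ))).mul (hmeasC z₀)) ?_ ?_ ?_
    · exact key.2.differentiableAt.differentiableWithinAt
    · -- integrable at z₀
      refine Integrable.mono' (hG.2 z₀.re hz₀re) (hmeasC z₀) ?_
      filter_upwards [ae_restrict_mem measurableSet_Ioi] with s hs
      rw [hnorm z₀ s hs]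
    · -- bound
      filter_upwards [ae_restrict_mem measurableSet_Ioi] with s hs
      intro z hz
      have hs0 : (0:ℝ) < s := hs
      have hzre : z₀.re/2 ≤ z.re := by
        have h1 : |(z - z₀).re| ≤ ‖z - z₀‖ := Complex.abs_re_le_norm _
        have h2 : ‖z - z₀‖ < z₀.re/2 := mem_ball_iff_norm.1 hz
        have := abs_lt.1 (lt_of_le_of_lt h1 h2)
        simp only [Complex.sub_re] at this
        linarith [this.1]
      rw [norm_mul, hnorm z s hs0]
      have : ‖(-(s:ℂ))‖ = s := by
        rw [norm_neg]
        simp [abs_of_nonneg hs0.le]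
      rw [this]
      have : Real.exp (-z.re * s) ≤ Real.exp (-(z₀.re/2) * s) :=
        Real.exp_le_exp.2 (by nlinarith)
      have habs : (0:ℝ) ≤ |G s| := abs_nonneg _
      nlinarith [Real.exp_nonneg (-z.re * s), mul_le_mul_of_nonneg_right this habs]
    · -- integrability of bound
      simpa [pow_one, IntegrableOn] using hG.integrableOn_pow 1 (half_pos hz₀re)
    · -- derivative in z
      filter_upwards with s
      intro z hz
      have h1 : HasDerivAt (fun z : ℂ => -z * (s:ℂ)) (-(s:ℂ)) z := by
        simpa using ((hasDerivAt_id z).neg.mul_const (s:ℂ))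
      have h2 := (h1.cexp).mul_const ((G s : ℝ) : ℂ)
      refine h2.congr_deriv ?_
      ring
  have hA : AnalyticOnNhd ℂ FC U := hdiff.analyticOnNhd hUopen
  have hAR : AnalyticOnNhd ℝ FC U := hA.restrictScalars
  have hofReal : AnalyticOnNhd ℝ (fun x : ℝ => (x : ℂ)) (Ioi 0) := fun x _ =>
    Complex.ofRealCLM.analyticAt x
  have h1 : AnalyticOnNhd ℝ (fun x : ℝ => FC (x : ℂ)) (Ioi 0) :=
    hAR.comp hofReal (fun x hx => by simpa [hU] using (mem_Ioi.1 hx))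
  have hre : AnalyticOnNhd ℝ (fun z : ℂ => z.re) univ := fun z _ => Complex.reCLM.analyticAt z
  have h2 : AnalyticOnNhd ℝ (fun x : ℝ => (FC (x : ℂ)).re) (Ioi 0) :=
    hre.comp h1 (mapsTo_univ _ _)
  refine (h2.contDiffOn (n := (⊤ : ℕ∞)) isOpen_Ioi.uniqueDiffOn).congr ?_
  intro x hx
  have : FC (x : ℂ) = ((LInt G x : ℝ) : ℂ) := by
    rw [hFCdef]
    simp only
    have hcong : (∫ s in Ioi (0:ℝ), Complex.exp (-(x:ℂ) * s) * ((G s : ℝ) : ℂ))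
        = ∫ s in Ioi (0:ℝ), ((Real.exp (-x * s) * G s : ℝ) : ℂ) := by
      refine setIntegral_congr_fun measurableSet_Ioi fun s _ => ?_
      rw [Complex.ofReal_mul, Complex.ofReal_exp]
      push_cast
      ring_nf
    rw [LInt, hcong]
    exact integral_ofReal
  rw [this, Complex.ofReal_re]

lemma completelyMonotonic_LInt (hG : LHyp G) (hpos : ∀ s ∈ Ioi (0:ℝ), 0 ≤ G s) :
    ContDiffOn ℝ (⊤ : ℕ∞) (LInt G) (Ioi 0) ∧
      ∀ n : ℕ, ∀ x : ℝ, 0 < x → 0 ≤ (-1 : ℝ) ^ n * iteratedDerivWithin n (LInt G) (Ioi 0) x := by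
  refine ⟨contDiffOn_LInt hG, fun n x hx => ?_⟩
  rw [iteratedDerivWithin_LInt n G hG x hx, LInt, ← integral_const_mul]
  refine setIntegral_nonneg measurableSet_Ioi fun s hs => ?_
  have hs0 : (0:ℝ) < s := hs
  have hsq : (-1:ℝ)^n * (-1:ℝ)^n = 1 := by rw [← mul_pow]; norm_num
  have heq : (-1:ℝ)^n * (Real.exp (-x*s) * ((-1)^n * s^n * G s))
      = Real.exp (-x*s) * (s^n * G s) := by
    rw [show (-1:ℝ)^n * (Real.exp (-x*s) * ((-1)^n * s^n * G s))
        = ((-1:ℝ)^n * (-1:ℝ)^n) * (Real.exp (-x*s) * (s^n * G s)) from by ring, hsq, one_mul]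
  rw [heq]
  exact mul_nonneg (Real.exp_nonneg _) (mul_nonneg (pow_nonneg hs0.le _) (hpos s hs))

lemma hasDerivAt_iDW {u : ℝ → ℝ} (hu : ContDiffOn ℝ (⊤ : ℕ∞) u (Ioi 0)) (m : ℕ)
    {x : ℝ} (hx : x ∈ Ioi (0:ℝ)) :
    HasDerivAt (iteratedDerivWithin m u (Ioi 0)) (iteratedDerivWithin (m+1) u (Ioi 0) x) x := by
  have hdiff : DifferentiableOn ℝ (iteratedDerivWithin m u (Ioi 0)) (Ioi 0) :=
    hu.differentiableOn_iteratedDerivWithin (by exact_mod_cast lt_top_iff_ne_top.2 (by simp))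
      isOpen_Ioi.uniqueDiffOn
  have hDA : DifferentiableAt ℝ (iteratedDerivWithin m u (Ioi 0)) x :=
    (hdiff x hx).differentiableAt (Ioi_mem_nhds hx)
  rw [iteratedDerivWithin_succ,
    derivWithin_of_isOpen isOpen_Ioi hx]
  exact hDA.hasDerivAt

lemma iDW_id_mul {u : ℝ → ℝ} (hu : ContDiffOn ℝ (⊤:ℕ∞) u (Ioi 0)) :
    ∀ n : ℕ, ∀ x ∈ Ioi (0:ℝ),
      iteratedDerivWithin (n+1) (fun t => t * u t) (Ioi 0) x
        = x * iteratedDerivWithin (n+1) u (Ioi 0) x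
          + (n+1) * iteratedDerivWithin n u (Ioi 0) x := by
  intro n
  induction n with
  | zero =>
    intro x hx
    have h0 : iteratedDerivWithin 0 u (Ioi 0) = u := by
      funext y; simp [iteratedDerivWithin_zero]
    have hu1 : HasDerivAt u (iteratedDerivWithin 1 u (Ioi 0) x) x := by
      have := hasDerivAt_iDW hu 0 hx
      rwa [h0] at this
    have hprod : HasDerivAt (fun t => t * u t)
        (1 * u x + x * iteratedDerivWithin 1 u (Ioi 0) x) x := (hasDerivAt_id x).mul hu1
    rw [iteratedDerivWithin_one,
      derivWithin_of_isOpen isOpen_Ioi hx, hprod.deriv]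
    simp [iteratedDerivWithin_zero]
    ring
  | succ n IH =>
    intro x hx
    rw [iteratedDerivWithin_succ]
    rw [derivWithin_congr (fun y hy => IH y hy) (IH x hx)]
    rw [derivWithin_of_isOpen isOpen_Ioi hx]
    have hA := hasDerivAt_iDW hu (n+1) hx
    have hB := hasDerivAt_iDW hu n hx
    have hprod : HasDerivAt
        (fun y => y * iteratedDerivWithin (n+1) u (Ioi 0) y
          + ((n:ℝ)+1) * iteratedDerivWithin n u (Ioi 0) y)
        (1 * iteratedDerivWithin (n+1) u (Ioi 0) x
          + x * iteratedDerivWithin (n+1+1) u (Ioi 0) x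
          + ((n:ℝ)+1) * iteratedDerivWithin (n+1) u (Ioi 0) x) x :=
      ((hasDerivAt_id x).mul hA).add (hB.const_mul ((n:ℝ)+1))
    rw [hprod.deriv]
    push_cast
    ring

lemma tendsto_Ioc_integral_atTop {ψ : ℝ → ℝ} {a : ℝ} (hψ : IntegrableOn ψ (Ioi a)) :
    Tendsto (fun b => ∫ s in Ioc a b, ψ s) atTop (𝓝 (∫ s in Ioi a, ψ s)) := by
  have key : ∀ b : ℝ, (∫ s in Ioc a b, ψ s) = ∫ s in Ioi a, (Ioc a b).indicator ψ s := by
    intro b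
    rw [integral_indicator measurableSet_Ioc, Measure.restrict_restrict measurableSet_Ioc,
      inter_eq_self_of_subset_left Ioc_subset_Ioi_self]
  simp_rw [key]
  refine tendsto_integral_filter_of_dominated_convergence (fun s => ‖ψ s‖)
    (Filter.Eventually.of_forall fun b => hψ.1.indicator measurableSet_Ioc)
    (Filter.Eventually.of_forall fun b => ?_) hψ.norm ?_
  · filter_upwards with s
    exact norm_indicator_le_norm_self ψ s
  · filter_upwards [ae_restrict_mem measurableSet_Ioi] with s hs
    refine tendsto_const_nhds.congr' ?_
    filter_upwards [eventually_ge_atTop s] with b hb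
    exact (indicator_of_mem (show s ∈ Ioc a b from ⟨hs, hb⟩) ψ).symm

lemma tendsto_Ioc_integral_bot {ψ : ℝ → ℝ} (hψ : IntegrableOn ψ (Ioc 0 1)) :
    Tendsto (fun ε => ∫ s in Ioc ε (1:ℝ), ψ s) (𝓝[>] (0:ℝ))
      (𝓝 (∫ s in Ioc (0:ℝ) 1, ψ s)) := by
  have h1 : Tendsto (fun ε => ∫ s in Ioc (0:ℝ) 1, (Ioi ε).indicator ψ s) (𝓝[>] (0:ℝ))
      (𝓝 (∫ s in Ioc (0:ℝ) 1, ψ s)) := by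
    refine tendsto_integral_filter_of_dominated_convergence (fun s => ‖ψ s‖)
      (Filter.Eventually.of_forall fun ε => hψ.1.indicator measurableSet_Ioi)
      (Filter.Eventually.of_forall fun ε => ?_) hψ.norm ?_
    · filter_upwards with s
      exact norm_indicator_le_norm_self ψ s
    · filter_upwards [ae_restrict_mem measurableSet_Ioc] with s hs
      refine tendsto_const_nhds.congr' ?_
      filter_upwards [Ioo_mem_nhdsGT_of_mem (by constructor <;> [exact le_refl 0; exact hs.1])]
        with ε hε
      exact (indicator_of_mem (show s ∈ Ioi ε from hε.2) ψ).symm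
  refine h1.congr' ?_
  filter_upwards [self_mem_nhdsWithin] with ε hε
  have hε' : (0:ℝ) < ε := hε
  rw [integral_indicator measurableSet_Ioi, Measure.restrict_restrict measurableSet_Ioi]
  have hset : Ioi ε ∩ Ioc (0:ℝ) 1 = Ioc ε 1 := by
    ext t
    simp only [mem_inter_iff, mem_Ioi, mem_Ioc]
    constructor
    · rintro ⟨h1, _, h3⟩; exact ⟨h1, h3⟩
    · rintro ⟨h1, h2⟩; exact ⟨h1, lt_trans hε' h1, h2⟩
  rw [hset]

lemma exists_limits_of_integrable_deriv {Φ ψ : ℝ → ℝ}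
    (hd : ∀ s ∈ Ioi (0:ℝ), HasDerivAt Φ (ψ s) s)
    (hψ : IntegrableOn ψ (Ioi 0)) :
    ∃ L0 L1 : ℝ, Tendsto Φ (𝓝[>] 0) (𝓝 L0) ∧ Tendsto Φ atTop (𝓝 L1) ∧
      (∫ s in Ioi (0:ℝ), ψ s) = L1 - L0 := by
  have hFTC : ∀ a b : ℝ, 0 < a → a ≤ b → (∫ s in Ioc a b, ψ s) = Φ b - Φ a := by
    intro a b ha hab
    rw [← intervalIntegral.integral_of_le hab]
    apply intervalIntegral.integral_eq_sub_of_hasDerivAt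
    · intro t ht
      rw [uIcc_of_le hab] at ht
      exact hd t (lt_of_lt_of_le ha ht.1)
    · rw [intervalIntegrable_iff]
      refine hψ.mono_set ?_
      rw [uIoc_of_le hab]
      exact fun t ht => lt_of_lt_of_le ha (le_of_lt ht.1)
  have htop : Tendsto Φ atTop (𝓝 (Φ 1 + ∫ s in Ioi (1:ℝ), ψ s)) := by
    have h1 := tendsto_Ioc_integral_atTop (hψ.mono_set (Ioi_subset_Ioi zero_le_one))
    have h2 : Tendsto (fun b => Φ 1 + ∫ s in Ioc (1:ℝ) b, ψ s) atTop
        (𝓝 (Φ 1 + ∫ s in Ioi (1:ℝ), ψ s)) := tendsto_const_nhds.add h1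
    refine h2.congr' ?_
    filter_upwards [eventually_ge_atTop (1:ℝ)] with b hb
    rw [hFTC 1 b one_pos hb]
    ring
  have hbot : Tendsto Φ (𝓝[>] (0:ℝ)) (𝓝 (Φ 1 - ∫ s in Ioc (0:ℝ) 1, ψ s)) := by
    have h1 := tendsto_Ioc_integral_bot (hψ.mono_set Ioc_subset_Ioi_self)
    have h2 : Tendsto (fun ε => Φ 1 - ∫ s in Ioc ε (1:ℝ), ψ s) (𝓝[>] (0:ℝ))
        (𝓝 (Φ 1 - ∫ s in Ioc (0:ℝ) 1, ψ s)) := tendsto_const_nhds.sub h1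
    refine h2.congr' ?_
    filter_upwards [Ioo_mem_nhdsGT_of_mem (by constructor <;> norm_num : (0:ℝ) ∈ Ico (0:ℝ) 1)]
      with ε hε
    rw [hFTC ε 1 hε.1 hε.2.le]
    ring
  refine ⟨_, _, hbot, htop, ?_⟩
  have hsplit : (∫ s in Ioi (0:ℝ), ψ s)
      = (∫ s in Ioc (0:ℝ) 1, ψ s) + ∫ s in Ioi (1:ℝ), ψ s := by
    rw [← setIntegral_union (Ioc_disjoint_Ioi le_rfl) measurableSet_Ioi
      (hψ.mono_set Ioc_subset_Ioi_self) (hψ.mono_set (Ioi_subset_Ioi zero_le_one))]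
    rw [Ioc_union_Ioi_eq_Ioi zero_le_one]
  rw [hsplit]
  ring

lemma limit_zero_bot {g : ℝ → ℝ} (hg : IntegrableOn g (Ioi 0)) {Φ : ℝ → ℝ} {L : ℝ}
    (hrel : ∀ s ∈ Ioi (0:ℝ), |Φ s| = s * g s)
    (hL : Tendsto Φ (𝓝[>] (0:ℝ)) (𝓝 L)) : L = 0 := by
  by_contra hL0
  have hc : 0 < |L| := abs_pos.2 hL0
  have hev : ∀ᶠ s in 𝓝[>] (0:ℝ), |L| / 2 < |Φ s| :=
    (hL.abs).eventually_const_lt (by linarith)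
  rw [eventually_iff, mem_nhdsGT_iff_exists_Ioo_subset] at hev
  obtain ⟨δ, hδmem, hδ⟩ := hev
  have hδ0 : (0:ℝ) < δ := hδmem
  have hinv : IntegrableOn (fun s : ℝ => s⁻¹) (Ioo 0 δ) := by
    refine Integrable.mono' (((hg.mono_set (fun t ht => ht.1)).const_mul (2 / |L|))) ?_ ?_
    · exact (continuousOn_inv₀.mono (fun t (ht : t ∈ Ioo (0:ℝ) δ) => ne_of_gt ht.1)
        ).aestronglyMeasurable measurableSet_Ioo
    · filter_upwards [ae_restrict_mem measurableSet_Ioo] with s hs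
      have hs0 : (0:ℝ) < s := hs.1
      have key : |L| / 2 ≤ s * g s := by
        rw [← hrel s hs0]
        exact le_of_lt (hδ hs)
      have h2 : s⁻¹ * (|L| / 2) ≤ s⁻¹ * (s * g s) :=
        mul_le_mul_of_nonneg_left key (inv_nonneg.2 hs0.le)
      rw [← mul_assoc, inv_mul_cancel₀ hs0.ne', one_mul] at h2
      rw [Real.norm_eq_abs, abs_of_nonneg (inv_nonneg.2 hs0.le)]
      calc s⁻¹ = (2 / |L|) * (s⁻¹ * (|L| / 2)) := by field_simp
        _ ≤ (2 / |L|) * g s := by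
            refine mul_le_mul_of_nonneg_left h2 (by positivity)
  have : IntegrableOn (fun s : ℝ => s ^ (-1 : ℝ)) (Ioo 0 δ) := by
    refine hinv.congr_fun ?_ measurableSet_Ioo
    intro s hs
    show s⁻¹ = s ^ (-1 : ℝ)
    rw [Real.rpow_neg_one]
  rw [intervalIntegral.integrableOn_Ioo_rpow_iff hδ0] at this
  linarith

lemma limit_zero_top {g : ℝ → ℝ} (hg : IntegrableOn g (Ioi 0)) {Φ : ℝ → ℝ} {L : ℝ}
    (hrel : ∀ s ∈ Ioi (0:ℝ), |Φ s| = s * g s)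
    (hL : Tendsto Φ atTop (𝓝 L)) : L = 0 := by
  by_contra hL0
  have hc : 0 < |L| := abs_pos.2 hL0
  have hev : ∀ᶠ s in atTop, |L| / 2 < |Φ s| :=
    (hL.abs).eventually_const_lt (by linarith)
  obtain ⟨A, hA⟩ := eventually_atTop.1 hev
  set B := max A 1 with hB
  have hB0 : (0:ℝ) < B := lt_of_lt_of_le one_pos (le_max_right _ _)
  have hinv : IntegrableOn (fun s : ℝ => s⁻¹) (Ioi B) := by
    refine Integrable.mono'
      (((hg.mono_set (Ioi_subset_Ioi hB0.le)).const_mul (2 / |L|))) ?_ ?_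
    · exact (continuousOn_inv₀.mono (fun t (ht : t ∈ Ioi B) => ne_of_gt (lt_trans hB0 ht))
        ).aestronglyMeasurable measurableSet_Ioi
    · filter_upwards [ae_restrict_mem measurableSet_Ioi] with s hs
      have hs0 : (0:ℝ) < s := lt_trans hB0 hs
      have key : |L| / 2 ≤ s * g s := by
        rw [← hrel s hs0]
        exact le_of_lt (hA s (le_trans (le_max_left _ _) (le_of_lt hs)))
      have h2 : s⁻¹ * (|L| / 2) ≤ s⁻¹ * (s * g s) :=
        mul_le_mul_of_nonneg_left key (inv_nonneg.2 hs0.le)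
      rw [← mul_assoc, inv_mul_cancel₀ hs0.ne', one_mul] at h2
      rw [Real.norm_eq_abs, abs_of_nonneg (inv_nonneg.2 hs0.le)]
      calc s⁻¹ = (2 / |L|) * (s⁻¹ * (|L| / 2)) := by field_simp
        _ ≤ (2 / |L|) * g s := by
            refine mul_le_mul_of_nonneg_left h2 (by positivity)
  exact not_IntegrableOn_Ioi_inv hinv

lemma ibp_general {a x : ℝ} (hx : 0 < x) {h h' : ℝ → ℝ}
    (hmeas : AEStronglyMeasurable h (volume.restrict (Ioi 0)))
    (hmeas' : AEStronglyMeasurable h' (volume.restrict (Ioi 0)))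
    (hd : ∀ s ∈ Ioi (0:ℝ), HasDerivAt h (h' s) s)
    (hint1 : ∀ y : ℝ, 0 < y →
      IntegrableOn (fun s => Real.exp (-y*s) * (s ^ (a-1) * |h s|)) (Ioi 0))
    (hint2 : IntegrableOn (fun s => Real.exp (-x*s) * (s ^ a * |h' s|)) (Ioi 0)) :
    a * (∫ s in Ioi (0:ℝ), Real.exp (-x*s) * (s ^ (a-1) * h s))
      - x * (∫ s in Ioi (0:ℝ), Real.exp (-x*s) * (s ^ a * h s))
      + (∫ s in Ioi (0:ℝ), Real.exp (-x*s) * (s ^ a * h' s)) = 0 := by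
  set Φ : ℝ → ℝ := fun s => Real.exp (-x*s) * (s ^ a * h s) with hΦdef
  set ψ : ℝ → ℝ := fun s =>
    Real.exp (-x*s) * (a * (s^(a-1) * h s) - x * (s^a * h s) + s^a * h' s) with hψdef
  have hpowm : AEStronglyMeasurable (fun s : ℝ => s ^ (a-1))
      (volume.restrict (Ioi 0)) :=
    ((continuousOn_id.rpow_const (fun t ht => Or.inl (ne_of_gt ht))).aestronglyMeasurable
      measurableSet_Ioi)
  have hpowm' : AEStronglyMeasurable (fun s : ℝ => s ^ a)
      (volume.restrict (Ioi 0)) :=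
    ((continuousOn_id.rpow_const (fun t ht => Or.inl (ne_of_gt ht))).aestronglyMeasurable
      measurableSet_Ioi)
  have hdΦ : ∀ s ∈ Ioi (0:ℝ), HasDerivAt Φ (ψ s) s := by
    intro s hs
    have hs0 : (0:ℝ) < s := hs
    have hexp : HasDerivAt (fun s : ℝ => Real.exp (-x*s)) (Real.exp (-x*s) * (-x)) s := by
      have h1 : HasDerivAt (fun s : ℝ => -x * s) (-x) s := by
        simpa using (hasDerivAt_id s).const_mul (-x)
      exact h1.exp
    have hpow : HasDerivAt (fun s : ℝ => s ^ a) (a * s^(a-1)) s :=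
      Real.hasDerivAt_rpow_const (Or.inl hs0.ne')
    have hph : HasDerivAt (fun s => s ^ a * h s)
        (a * s^(a-1) * h s + s^a * h' s) s := hpow.mul (hd s hs)
    have := hexp.mul hph
    refine this.congr_deriv ?_
    rw [hψdef]
    ring
  have I1 : IntegrableOn (fun s => Real.exp (-x*s) * (s^(a-1) * h s)) (Ioi 0) := by
    refine Integrable.mono' (hint1 x hx) ((aesm_exp x).mul (hpowm.mul hmeas)) ?_
    filter_upwards [ae_restrict_mem measurableSet_Ioi] with s hs
    have hs0 : (0:ℝ) < s := hs
    rw [Real.norm_eq_abs, abs_mul, abs_mul, abs_of_nonneg (Real.exp_nonneg _),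
      abs_of_nonneg (Real.rpow_nonneg hs0.le _)]
  have J2 : IntegrableOn (fun s => Real.exp (-x*s) * (s^a * |h s|)) (Ioi 0) := by
    refine Integrable.mono' ((hint1 (x/2) (half_pos hx)).const_mul (2/x))
      ((aesm_exp x).mul (hpowm'.mul (hmeas.norm.congr
        (Filter.Eventually.of_forall fun s => Real.norm_eq_abs _)))) ?_
    filter_upwards [ae_restrict_mem measurableSet_Ioi] with s hs
    have hs0 : (0:ℝ) < s := hs
    have hb := pow_mul_exp_le 1 hx hs0.le
    simp only [pow_one, Nat.factorial_one, Nat.cast_one, one_mul] at hb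
    rw [Real.norm_eq_abs, abs_of_nonneg (by positivity)]
    calc Real.exp (-x*s) * (s^a * |h s|)
        = (s * Real.exp (-x*s)) * (s^(a-1) * |h s|) := by
          rw [show a = (a-1)+1 from by ring, Real.rpow_add_one hs0.ne']
          ring_nf
      _ ≤ ((2/x) * Real.exp (-(x/2)*s)) * (s^(a-1) * |h s|) := by
          refine mul_le_mul_of_nonneg_right ?_ (by positivity)
          simpa [mul_comm] using hb
      _ = (2/x) * (Real.exp (-(x/2)*s) * (s^(a-1) * |h s|)) := by ring
  have I2 : IntegrableOn (fun s => Real.exp (-x*s) * (s^a * h s)) (Ioi 0) := by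
    refine Integrable.mono' J2 ((aesm_exp x).mul (hpowm'.mul hmeas)) ?_
    filter_upwards [ae_restrict_mem measurableSet_Ioi] with s hs
    have hs0 : (0:ℝ) < s := hs
    rw [Real.norm_eq_abs, abs_mul, abs_mul, abs_of_nonneg (Real.exp_nonneg _),
      abs_of_nonneg (Real.rpow_nonneg hs0.le _)]
  have I3 : IntegrableOn (fun s => Real.exp (-x*s) * (s^a * h' s)) (Ioi 0) := by
    refine Integrable.mono' hint2 ((aesm_exp x).mul (hpowm'.mul hmeas')) ?_
    filter_upwards [ae_restrict_mem measurableSet_Ioi] with s hs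
    have hs0 : (0:ℝ) < s := hs
    rw [Real.norm_eq_abs, abs_mul, abs_mul, abs_of_nonneg (Real.exp_nonneg _),
      abs_of_nonneg (Real.rpow_nonneg hs0.le _)]
  have Ia : Integrable (fun s => a * (Real.exp (-x*s) * (s^(a-1) * h s)))
      (volume.restrict (Ioi 0)) := I1.const_mul a
  have Ib : Integrable (fun s => x * (Real.exp (-x*s) * (s^a * h s)))
      (volume.restrict (Ioi 0)) := I2.const_mul x
  have Iab : Integrable (fun s => a * (Real.exp (-x*s) * (s^(a-1) * h s))
      - x * (Real.exp (-x*s) * (s^a * h s))) (volume.restrict (Ioi 0)) := Ia.sub Ib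
  have hψint : IntegrableOn ψ (Ioi 0) := by
    have base : IntegrableOn (fun s => (a * (Real.exp (-x*s) * (s^(a-1) * h s))
        - x * (Real.exp (-x*s) * (s^a * h s))) + Real.exp (-x*s) * (s^a * h' s))
        (Ioi 0) := Iab.add I3
    refine IntegrableOn.congr_fun base ?_ measurableSet_Ioi
    intro s hs
    rw [hψdef]
    ring
  obtain ⟨L0, L1, hT0, hT1, hI⟩ := exists_limits_of_integrable_deriv hdΦ hψint
  have hrel : ∀ s ∈ Ioi (0:ℝ), |Φ s| = s * (Real.exp (-x*s) * (s^(a-1) * |h s|)) := by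
    intro s hs
    have hs0 : (0:ℝ) < s := hs
    rw [hΦdef]
    simp only
    rw [abs_mul, abs_mul, abs_of_nonneg (Real.exp_nonneg _),
      abs_of_nonneg (Real.rpow_nonneg hs0.le _),
      show a = (a-1)+1 from by ring, Real.rpow_add_one hs0.ne']
    ring
  have hL0 : L0 = 0 := limit_zero_bot (hint1 x hx) hrel hT0
  have hL1 : L1 = 0 := limit_zero_top (hint1 x hx) hrel hT1
  rw [hL0, hL1] at hI
  have hψ0 : (∫ s in Ioi (0:ℝ), ψ s) = 0 := by rw [hI]; ring
  have hsplit : (∫ s in Ioi (0:ℝ), ψ s)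
      = a * (∫ s in Ioi (0:ℝ), Real.exp (-x*s) * (s ^ (a-1) * h s))
        - x * (∫ s in Ioi (0:ℝ), Real.exp (-x*s) * (s ^ a * h s))
        + (∫ s in Ioi (0:ℝ), Real.exp (-x*s) * (s ^ a * h' s)) := by
    have heq : (∫ s in Ioi (0:ℝ), ψ s)
        = ∫ s in Ioi (0:ℝ), (a * (Real.exp (-x*s) * (s^(a-1) * h s))
            - x * (Real.exp (-x*s) * (s^a * h s))
            + Real.exp (-x*s) * (s^a * h' s)) := by
      refine setIntegral_congr_fun measurableSet_Ioi fun s _ => ?_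
      rw [hψdef]
      ring
    rw [heq, integral_add Iab I3, integral_sub Ia Ib, integral_const_mul, integral_const_mul]
  rw [← hsplit, hψ0]

end CkCmAux2

end Aux

open CkCmAux CkCmAux2 Filter Topology in
theorem ck_cm_of_density (lam : ℝ) (hlam : 0 < lam) (k : ℕ) (m : ℝ → ℝ)
    (hm : ContDiffOn ℝ (⊤ : ℕ∞) m (Set.Ioi 0))
    (hmpos : ∀ s : ℝ, 0 < s → 0 < m s)
    (hmono : ∀ j, j ≤ k → ∀ s : ℝ, 0 < s →
      0 ≤ (-1 : ℝ) ^ j * s ^ j * iteratedDerivWithin j m (Set.Ioi 0) s)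
    (hint : ∀ j, j ≤ k → ∀ x : ℝ, 0 < x →
      IntegrableOn
        (fun s => Real.exp (-x * s) * s ^ (lam - 1 + (j : ℝ)) *
          |iteratedDerivWithin j m (Set.Ioi 0) s|) (Set.Ioi 0))
    (f : ℝ → ℝ)
    (hf : ∀ x : ℝ, 0 < x →
      f x = ∫ s in Set.Ioi 0, Real.exp (-x * s) * s ^ (lam - 1) * m s) :
    ∀ j, j ≤ k →
      (∀ x : ℝ, 0 < x →
        x ^ (1 - lam) *
            iteratedDerivWithin j (fun t => t ^ (lam - 1 + (j : ℝ)) * f t) (Set.Ioi 0) x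
          = ∫ s in Set.Ioi 0,
              Real.exp (-x * s) * s ^ (lam - 1) *
                ((-1 : ℝ) ^ j * s ^ j * iteratedDerivWithin j m (Set.Ioi 0) s))
      ∧
      CompletelyMonotonic
        (fun x => x ^ (1 - lam) *
          iteratedDerivWithin j (fun t => t ^ (lam - 1 + (j : ℝ)) * f t) (Set.Ioi 0) x) := by
  have hm' : ContDiffOn ℝ (⊤:ℕ∞) m (Set.Ioi 0) := hm.of_le (by simp)
  -- LHyp for the density at each level
  have hGhyp : ∀ i, i ≤ k →
      LHyp (fun s => s ^ (lam - 1 + (i:ℝ)) * iteratedDerivWithin i m (Set.Ioi 0) s) := by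
    intro i hik
    constructor
    · refine ContinuousOn.aestronglyMeasurable ?_ measurableSet_Ioi
      exact (continuousOn_id.rpow_const (fun t ht => Or.inl (ne_of_gt ht))).mul
        (hm.continuousOn_iteratedDerivWithin (by exact_mod_cast le_top) isOpen_Ioi.uniqueDiffOn)
    · intro x hx
      refine (hint i hik x hx).congr_fun ?_ measurableSet_Ioi
      intro s hs
      have hs0 : (0:ℝ) < s := hs
      show Real.exp (-x*s) * s ^ (lam-1+(i:ℝ)) * |iteratedDerivWithin i m (Set.Ioi 0) s|
        = Real.exp (-x*s) * |s ^ (lam-1+(i:ℝ)) * iteratedDerivWithin i m (Set.Ioi 0) s|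
      rw [abs_mul, abs_of_nonneg (Real.rpow_nonneg hs0.le _), mul_assoc]
  -- f agrees with the Laplace transform of the base density
  have hfLInt : EqOn f
      (LInt (fun s => s ^ (lam - 1 + ((0:ℕ):ℝ)) * iteratedDerivWithin 0 m (Set.Ioi 0) s))
      (Set.Ioi 0) := by
    intro x hx
    have hx0 : (0:ℝ) < x := hx
    rw [hf x hx0, LInt]
    refine setIntegral_congr_fun measurableSet_Ioi fun s hs => ?_
    simp only [iteratedDerivWithin_zero, Nat.cast_zero, add_zero]
    rw [mul_assoc]
  -- the main identity, by induction
  have main : ∀ j, j ≤ k → ∀ x ∈ Set.Ioi (0:ℝ),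
      iteratedDerivWithin j (fun t => t ^ (lam - 1 + (j:ℝ)) * f t) (Set.Ioi 0) x
        = x ^ (lam - 1) * ((-1:ℝ)^j
            * LInt (fun s => s ^ (lam - 1 + (j:ℝ)) * iteratedDerivWithin j m (Set.Ioi 0) s) x) := by
    intro j
    induction j with
    | zero =>
      intro _ x hx
      simp only [iteratedDerivWithin_zero, pow_zero, one_mul, Nat.cast_zero, add_zero]
      rw [show f x = _ from hfLInt hx]
      simp only [Nat.cast_zero, add_zero]
      have hiz : (fun s : ℝ => s ^ (lam-1) * iteratedDerivWithin 0 m (Set.Ioi 0) s)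
          = fun s : ℝ => s ^ (lam-1) * m s := by
        funext s
        rw [iteratedDerivWithin_zero]
      rw [hiz]
    | succ j IH =>
      intro hjk x hx
      have hj : j ≤ k := le_trans (Nat.le_succ j) hjk
      have hx0 : (0:ℝ) < x := hx
      set c : ℝ := lam - 1 + (j:ℝ) with hc
      have hcast : lam - 1 + ((j+1:ℕ):ℝ) = c + 1 := by push_cast; ring
      -- rewrite the function inside the iterated derivative
      have hEq : EqOn (fun t : ℝ => t ^ (lam-1+((j+1:ℕ):ℝ)) * f t)
          (fun t => t * (t ^ c * f t)) (Set.Ioi 0) := by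
        intro t ht
        have ht0 : (0:ℝ) < t := ht
        simp only
        rw [hcast, Real.rpow_add_one ht0.ne']
        ring
      rw [iteratedDerivWithin_congr hEq hx]
      -- smoothness of u := t^c * f t
      have hfC : ContDiffOn ℝ (⊤:ℕ∞) f (Set.Ioi 0) :=
        ((contDiffOn_LInt (hGhyp 0 (Nat.zero_le k))).of_le (by simp)).congr
          (fun y hy => hfLInt hy)
      have hu : ContDiffOn ℝ (⊤:ℕ∞) (fun t : ℝ => t ^ c * f t) (Set.Ioi 0) := by
        refine ContDiffOn.mul ?_ hfC
        intro t ht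
        exact (Real.contDiffAt_rpow_const_of_ne (ne_of_gt ht)).contDiffWithinAt
      rw [iDW_id_mul hu j x hx]
      -- identify the j-th iterated derivative via IH
      have hIH : EqOn (iteratedDerivWithin j (fun t : ℝ => t ^ c * f t) (Set.Ioi 0))
          (fun y => y ^ (lam-1) * ((-1:ℝ)^j
            * LInt (fun s => s ^ c * iteratedDerivWithin j m (Set.Ioi 0) s) y)) (Set.Ioi 0) :=
        fun y hy => IH hj y hy
      have hstep : iteratedDerivWithin (j+1) (fun t : ℝ => t ^ c * f t) (Set.Ioi 0) x
          = (lam-1) * x ^ (lam-1-1) * ((-1:ℝ)^j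
              * LInt (fun s => s ^ c * iteratedDerivWithin j m (Set.Ioi 0) s) x)
            + x ^ (lam-1) * ((-1:ℝ)^j
              * (∫ s in Set.Ioi (0:ℝ),
                  -(s * (Real.exp (-x*s) * (s ^ c * iteratedDerivWithin j m (Set.Ioi 0) s))))) := by
        rw [iteratedDerivWithin_succ,
          derivWithin_congr hIH (hIH hx), derivWithin_of_isOpen isOpen_Ioi hx]
        have hA := hasDerivAt_LInt (hGhyp j hj) hx0
        have hpow : HasDerivAt (fun y : ℝ => y ^ (lam-1)) ((lam-1) * x ^ (lam-1-1)) x :=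
          Real.hasDerivAt_rpow_const (Or.inl hx0.ne')
        have hprod := hpow.mul (hA.const_mul ((-1:ℝ)^j))
        exact hprod.deriv
      rw [hstep]
      have hIHx : iteratedDerivWithin j (fun t : ℝ => t ^ c * f t) (Set.Ioi 0) x
          = x ^ (lam-1) * ((-1:ℝ)^j
            * LInt (fun s => s ^ c * iteratedDerivWithin j m (Set.Ioi 0) s) x) := hIH hx
      rw [hIHx]
      -- the derivative integral in terms of the next power
      have hD : (∫ s in Set.Ioi (0:ℝ),
            -(s * (Real.exp (-x*s) * (s ^ c * iteratedDerivWithin j m (Set.Ioi 0) s))))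
          = - ∫ s in Set.Ioi (0:ℝ),
              Real.exp (-x*s) * (s ^ (c+1) * iteratedDerivWithin j m (Set.Ioi 0) s) := by
        rw [← integral_neg]
        refine setIntegral_congr_fun measurableSet_Ioi fun s hs => ?_
        have hs0 : (0:ℝ) < s := hs
        rw [Real.rpow_add_one hs0.ne']
        ring
      rw [hD]
      -- integration by parts
      have hmeasj : AEStronglyMeasurable (iteratedDerivWithin j m (Set.Ioi 0))
          (volume.restrict (Set.Ioi 0)) :=
        (hm.continuousOn_iteratedDerivWithin (by exact_mod_cast le_top) isOpen_Ioi.uniqueDiffOn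
          ).aestronglyMeasurable measurableSet_Ioi
      have hmeasj1 : AEStronglyMeasurable (iteratedDerivWithin (j+1) m (Set.Ioi 0))
          (volume.restrict (Set.Ioi 0)) :=
        (hm.continuousOn_iteratedDerivWithin (by exact_mod_cast le_top) isOpen_Ioi.uniqueDiffOn
          ).aestronglyMeasurable measurableSet_Ioi
      have hibp := ibp_general (a := c+1) hx0 hmeasj hmeasj1
        (fun s hs => hasDerivAt_iDW hm' j hs)
        (by
          intro y hy
          have := (hint j hj y hy)
          refine this.congr_fun ?_ measurableSet_Ioi
          intro s hs
          have hs0 : (0:ℝ) < s := hs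
          show Real.exp (-y*s) * s ^ c * |iteratedDerivWithin j m (Set.Ioi 0) s|
            = Real.exp (-y*s) * (s ^ (c+1-1) * |iteratedDerivWithin j m (Set.Ioi 0) s|)
          rw [show c+1-1 = c from by ring, mul_assoc])
        (by
          have := hint (j+1) hjk x hx0
          refine this.congr_fun ?_ measurableSet_Ioi
          intro s hs
          have hs0 : (0:ℝ) < s := hs
          show Real.exp (-x*s) * s ^ (lam-1+((j+1:ℕ):ℝ)) * |iteratedDerivWithin (j+1) m (Set.Ioi 0) s|
            = Real.exp (-x*s) * (s ^ (c+1) * |iteratedDerivWithin (j+1) m (Set.Ioi 0) s|)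
          rw [hcast, mul_assoc])
      rw [show c+1-1 = c from by ring] at hibp
      -- put everything together
      have hxx : x ^ (lam-1-1) * x = x ^ (lam-1) := by
        rw [← Real.rpow_add_one hx0.ne']
        norm_num
      rw [hcast]
      simp only [LInt]
      set P := ∫ s in Set.Ioi (0:ℝ),
        Real.exp (-x*s) * (s ^ c * iteratedDerivWithin j m (Set.Ioi 0) s) with hP
      set Q := ∫ s in Set.Ioi (0:ℝ),
        Real.exp (-x*s) * (s ^ (c+1) * iteratedDerivWithin j m (Set.Ioi 0) s) with hQ
      set R := ∫ s in Set.Ioi (0:ℝ),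
        Real.exp (-x*s) * (s ^ (c+1) * iteratedDerivWithin (j+1) m (Set.Ioi 0) s) with hR
      -- hibp : (c+1) * P - x * Q + R = 0
      linear_combination ((-1:ℝ)^j * x ^ (lam-1)) * hibp
        + ((lam-1) * (-1:ℝ)^j * P) * hxx
  refine fun j hjk => ⟨?_, ?_⟩
  · -- part 1
    intro x hx0
    have hx : x ∈ Set.Ioi (0:ℝ) := hx0
    rw [main j hjk x hx]
    rw [← mul_assoc, ← Real.rpow_add hx0]
    norm_num
    rw [LInt, ← integral_const_mul]
    refine setIntegral_congr_fun measurableSet_Ioi fun s hs => ?_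
    have hs0 : (0:ℝ) < s := hs
    rw [show lam - 1 + (j:ℝ) = (lam-1) + (j:ℝ) from by ring, Real.rpow_add hs0,
      Real.rpow_natCast]
    ring
  · -- part 2 : complete monotonicity
    set Gcm : ℝ → ℝ := fun s =>
      (-1:ℝ)^j * (s ^ (lam - 1 + (j:ℝ)) * iteratedDerivWithin j m (Set.Ioi 0) s) with hGcm
    have hGcmHyp : LHyp Gcm := by
      constructor
      · exact (aestronglyMeasurable_const.mul (hGhyp j hjk).1)
      · intro x hx
        refine ((hGhyp j hjk).2 x hx).congr_fun ?_ measurableSet_Ioi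
        intro s hs
        show Real.exp (-x*s) * |s ^ (lam-1+(j:ℝ)) * iteratedDerivWithin j m (Set.Ioi 0) s|
          = Real.exp (-x*s) * |Gcm s|
        rw [hGcm]
        simp only
        rw [abs_mul ((-1:ℝ)^j), abs_pow, abs_neg, abs_one, one_pow, one_mul]
    have hGcmpos : ∀ s ∈ Set.Ioi (0:ℝ), 0 ≤ Gcm s := by
      intro s hs
      have hs0 : (0:ℝ) < s := hs
      have := hmono j hjk s hs0
      rw [hGcm]
      simp only
      rw [show lam - 1 + (j:ℝ) = (lam-1) + (j:ℝ) from by ring, Real.rpow_add hs0,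
        Real.rpow_natCast]
      calc (0:ℝ) ≤ s ^ (lam-1) * ((-1:ℝ)^j * s^j * iteratedDerivWithin j m (Set.Ioi 0) s) :=
            mul_nonneg (Real.rpow_nonneg hs0.le _) this
        _ = (-1:ℝ)^j * (s ^ (lam-1) * s^j * iteratedDerivWithin j m (Set.Ioi 0) s) := by ring
    have hcm := completelyMonotonic_LInt hGcmHyp hGcmpos
    have hEqφ : EqOn (fun x => x ^ (1 - lam) *
        iteratedDerivWithin j (fun t => t ^ (lam - 1 + (j:ℝ)) * f t) (Set.Ioi 0) x)
        (LInt Gcm) (Set.Ioi 0) := by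
      intro x hx
      have hx0 : (0:ℝ) < x := hx
      simp only
      rw [main j hjk x hx, ← mul_assoc, ← Real.rpow_add hx0]
      norm_num
      rw [LInt, LInt, ← integral_const_mul]
      refine setIntegral_congr_fun measurableSet_Ioi fun s hs => ?_
      rw [hGcm]
      ring
    constructor
    · exact hcm.1.congr (fun x hx => hEqφ hx)
    · intro n x hx0
      have hx : x ∈ Set.Ioi (0:ℝ) := hx0
      rw [iteratedDerivWithin_congr hEqφ hx]
      exact hcm.2 n x hx0
end
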